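/- arXiv:2512.23544 — 11 statements merged into one kernel-verified Lean document; each statement's English description precedes it below -/
import Mathlib

section
/- Let κ be a cardinal satisfying the partition relation κ → (ω₁, (ω₁;ω₁)). Then every topological space X whose underlying set has cardinality κ and which is strongly separated (strongly left separated or strongly right separated) contains an uncountable discrete subspace, i.e., a subset D that is uncountable and discrete in the subspace topology. -/
universe u

/-- A topological space is *strongly left separated* if it has a well-ordering `r` such that
every point `x` has a closed neighborhood `W x` (a closed set containing `x` in its interior)
containing no `r`-predecessor of `x`. -/
def StronglyLeftSeparated (X : Type u) [TopologicalSpace X] : Prop :=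
  ∃ r : X → X → Prop, IsWellOrder X r ∧
    ∃ W : X → Set X, ∀ x : X, IsClosed (W x) ∧ x ∈ interior (W x) ∧
      ∀ y : X, r y x → y ∉ W x

/-- A topological space is *strongly right separated* if it has a well-ordering `r` such that
every point `x` has a closed neighborhood `W x` containing no `r`-successor of `x`. -/
def StronglyRightSeparated (X : Type u) [TopologicalSpace X] : Prop :=
  ∃ r : X → X → Prop, IsWellOrder X r ∧
    ∃ W : X → Set X, ∀ x : X, IsClosed (W x) ∧ x ∈ interior (W x) ∧
      ∀ y : X, r x y → y ∉ W x

/-- A space is *strongly separated* if it is strongly left or strongly right separated. -/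
def StronglySeparated (X : Type u) [TopologicalSpace X] : Prop :=
  StronglyLeftSeparated X ∨ StronglyRightSeparated X

/-- `A` is a set of ordinals of order type `ω₁`. -/
def HasOrderTypeOmega1 (A : Set Ordinal.{u}) : Prop :=
  Ordinal.type ((· < ·) : A → A → Prop) = (Cardinal.aleph 1).ord

/-- The partition relation `κ → (ω₁, (ω₁;ω₁))` : for every 2-coloring `k` of the pairs of
ordinals below (the initial ordinal of) `κ`, either there is a `0`-homogeneous set of
cardinality `ℵ₁`, or there are disjoint sets `A, B` of ordinals below `κ`, each of order type
`ω₁`, with `sup A = sup B`, such that `k {α, β} = 1` whenever `α ∈ A`, `β ∈ B` and `α < β`. -/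
def HalfGraphArrow (κ : Cardinal.{u}) : Prop :=
  ∀ k : Ordinal.{u} → Ordinal.{u} → Fin 2,
    (∃ H : Set Ordinal.{u}, H ⊆ Set.Iio κ.ord ∧ Cardinal.mk H = Cardinal.aleph 1 ∧
      ∀ α ∈ H, ∀ β ∈ H, α < β → k α β = 0) ∨
    (∃ A B : Set Ordinal.{u}, A ⊆ Set.Iio κ.ord ∧ B ⊆ Set.Iio κ.ord ∧ Disjoint A B ∧
      HasOrderTypeOmega1 A ∧ HasOrderTypeOmega1 B ∧ sSup A = sSup B ∧
      ∀ α ∈ A, ∀ β ∈ B, α < β → k α β = 1)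

/-!
Transport the partition relation along the well-order witnessing strong separation, colouring a
pair `x < y` by `x ∈ W y` in the right separated case and by `y ∈ W x` in the left separated one.
An uncountable `0`-homogeneous set is discrete: each `W x` isolates `x`. In the half-graph case
`(A;B)` the points of `A` coming first after some `b ∈ B` are cofinal in `A`, hence uncountable, and `W d \ W b`
isolates such a `d`, because `W b` contains every earlier point of `A`. Symmetrically, for the
points `d` of `B` coming first after some point of `A`, the set `W d \ W a` isolates `d`, where
`a` is the first point of `A` above `d`.
-/

open Cardinal Ordinal Set Topology Filter

theorem Set.not_countable_of_mk_eq_aleph_one {α : Type*} {s : Set α} (h : #s = ℵ₁) :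
    ¬s.Countable := by
  rw [← le_aleph0_iff_set_countable, h, not_le]
  exact aleph0_lt_aleph_one

theorem discreteTopology_of_forall_exists_mem_nhds {X : Type*} [TopologicalSpace X] {D : Set X}
    (h : ∀ x ∈ D, ∃ V ∈ 𝓝 x, ∀ y ∈ D, y ∈ V → y = x) : DiscreteTopology D := by
  rw [discreteTopology_subtype_iff']
  intro x hx
  obtain ⟨V, hV, hVD⟩ := h x hx
  refine ⟨interior V, isOpen_interior, Subset.antisymm ?_ ?_⟩
  · exact fun y ⟨hyV, hyD⟩ => hVD y hyD (interior_subset hyV)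
  · rintro _ rfl
    exact ⟨mem_interior_iff_mem_nhds.2 hV, hx⟩

namespace HasOrderTypeOmega1

variable {A B S : Set Ordinal.{u}} {a : Ordinal.{u}}

theorem mk_eq (hA : HasOrderTypeOmega1 A) : #A = ℵ₁ := by
  simpa using congrArg Ordinal.card hA

theorem not_countable (hA : HasOrderTypeOmega1 A) : ¬A.Countable :=
  not_countable_of_mk_eq_aleph_one hA.mk_eq

theorem nonempty (hA : HasOrderTypeOmega1 A) : A.Nonempty :=
  nonempty_iff_ne_empty.2 fun h => hA.not_countable (h ▸ countable_empty)

theorem countable_inter_Iio (hA : HasOrderTypeOmega1 A) (ha : a ∈ A) :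
    (A ∩ Iio a).Countable := by
  have h := typein_lt_type ((· < ·) : A → A → Prop) ⟨a, ha⟩
  rw [hA, lt_ord, card_typein, lt_aleph_one_iff, mk_le_aleph0_iff] at h
  have heq : A ∩ Iio a = Subtype.val '' {y : A | y < ⟨a, ha⟩} := by
    ext x
    simp [and_comm]
  rw [heq]
  exact (countable_coe_iff.1 h).image _

theorem not_countable_of_cofinal (hA : HasOrderTypeOmega1 A) (hS : S ⊆ A)
    (hcof : ∀ a ∈ A, ∃ s ∈ S, a < s) : ¬S.Countable := by
  intro hSc
  refine hA.not_countable ((hSc.biUnion fun s hs => hA.countable_inter_Iio (hS hs)).mono ?_)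
  intro a ha
  obtain ⟨s, hs, has⟩ := hcof a ha
  exact mem_biUnion hs ⟨ha, has⟩

theorem exists_gt (hA : HasOrderTypeOmega1 A) (ha : a ∈ A) : ∃ a' ∈ A, a < a' := by
  by_contra! h
  refine hA.not_countable (((hA.countable_inter_Iio ha).insert a).mono fun x hx => ?_)
  rcases (h x hx).lt_or_eq with hlt | rfl
  exacts [Or.inr ⟨hx, hlt⟩, Or.inl rfl]

theorem exists_gt_of_sSup_eq (hA : HasOrderTypeOmega1 A) (hB : HasOrderTypeOmega1 B)
    (hbdd : BddAbove A) (hAB : sSup A = sSup B) (ha : a ∈ A) : ∃ b ∈ B, a < b := by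
  obtain ⟨a', ha', haa'⟩ := hA.exists_gt ha
  exact exists_lt_of_lt_csSup hB.nonempty (hAB ▸ haa'.trans_le (le_csSup hbdd ha'))

end HasOrderTypeOmega1

section FirstAfter

variable {α : Type*} [LinearOrder α] {A B : Set α} {d : α}

def firstAfter (A B : Set α) : Set α :=
  {d | d ∈ B ∧ ∃ a ∈ A, a < d ∧ ∀ b ∈ B, a < b → d ≤ b}

theorem firstAfter_subset : firstAfter A B ⊆ B :=
  fun _ hd => hd.1

theorem exists_mem_firstAfter_gt [WellFoundedLT α] (hAB : ∀ b ∈ B, ∃ a ∈ A, b < a)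
    (hBA : ∀ a ∈ A, ∃ b ∈ B, a < b) {b : α} (hb : b ∈ B) : ∃ d ∈ firstAfter A B, b < d := by
  obtain ⟨a, ha, hba⟩ := hAB b hb
  obtain ⟨d, ⟨hdB, had⟩, hmin⟩ := wellFounded_lt.has_min {x | x ∈ B ∧ a < x} (hBA a ha)
  exact ⟨d, ⟨hdB, a, ha, had, fun x hxB hax => not_lt.1 (hmin x ⟨hxB, hax⟩)⟩, hba.trans had⟩

theorem exists_mem_lt_of_mem_firstAfter (hAB : Disjoint A B) (hd : d ∈ firstAfter A B) :
    ∃ a ∈ A, a < d ∧ ∀ b ∈ B, b < d → b < a := by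
  obtain ⟨-, a, ha, had, hfirst⟩ := hd
  refine ⟨a, ha, had, fun b hb hbd => lt_of_le_of_ne ?_ (hAB.ne_of_mem ha hb).symm⟩
  exact not_lt.1 fun hab => (hfirst b hb hab).not_gt hbd

theorem exists_mem_gt_forall_firstAfter [WellFoundedLT α] (hAB : Disjoint A B) (hd : d ∈ B)
    (hA : ∃ a ∈ A, d < a) : ∃ a ∈ A, d < a ∧ ∀ t ∈ firstAfter A B, d < t → a < t := by
  obtain ⟨a, ⟨ha, hda⟩, hmin⟩ := wellFounded_lt.has_min {x | x ∈ A ∧ d < x} hA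
  refine ⟨a, ha, hda, fun t ⟨_, a', ha', ha't, hfirst⟩ hdt => ?_⟩
  -- the point `a'` of `A` that `t` comes first after lies strictly between `d` and `t`
  have hda' : d < a' :=
    lt_of_le_of_ne (not_lt.1 fun ha'd => (hfirst d hd ha'd).not_gt hdt) (hAB.ne_of_mem ha' hd).symm
  exact (not_lt.1 (hmin a' ⟨ha', hda'⟩)).trans_lt ha't

end FirstAfter

section Preimage

variable {X : Type u} [LinearOrder X] {f : X → Ordinal.{u}} {A B : Set Ordinal.{u}}

theorem HasOrderTypeOmega1.exists_gt_preimage (hf : StrictMono f) (hA : HasOrderTypeOmega1 A)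
    (hB : HasOrderTypeOmega1 B) (hAf : A ⊆ range f) (hBf : B ⊆ range f) (hAB : sSup A = sSup B) :
    ∀ x ∈ f ⁻¹' A, ∃ y ∈ f ⁻¹' B, x < y := by
  intro x hx
  obtain ⟨b, hb, hxb⟩ := hA.exists_gt_of_sSup_eq hB (bddAbove_of_small.mono hAf) hAB hx
  obtain ⟨y, rfl⟩ := hBf hb
  exact ⟨y, hb, hf.lt_iff_lt.1 hxb⟩

theorem HasOrderTypeOmega1.not_countable_of_cofinal_preimage (hf : StrictMono f)
    (hA : HasOrderTypeOmega1 A) (hAf : A ⊆ range f) {S : Set X} (hS : S ⊆ f ⁻¹' A)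
    (hcof : ∀ x ∈ f ⁻¹' A, ∃ s ∈ S, x < s) : ¬S.Countable := by
  intro hSc
  refine hA.not_countable_of_cofinal (image_subset_iff.2 hS) (fun a ha => ?_) (hSc.image f)
  obtain ⟨x, rfl⟩ := hAf ha
  obtain ⟨s, hs, hxs⟩ := hcof x ha
  exact ⟨f s, mem_image_of_mem f hs, hf hxs⟩

theorem not_countable_firstAfter_preimage [WellFoundedLT X] (hf : StrictMono f)
    (hA : HasOrderTypeOmega1 A) (hB : HasOrderTypeOmega1 B) (hAf : A ⊆ range f)
    (hBf : B ⊆ range f) (hAB : sSup A = sSup B) :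
    ¬(firstAfter (f ⁻¹' A) (f ⁻¹' B)).Countable :=
  hB.not_countable_of_cofinal_preimage hf hBf firstAfter_subset fun _ hx =>
    exists_mem_firstAfter_gt (hB.exists_gt_preimage hf hA hBf hAf hAB.symm)
      (hA.exists_gt_preimage hf hB hAf hBf hAB) hx

end Preimage

theorem HalfGraphArrow.homogeneous_or_halfGraph {X : Type u} [LinearOrder X] [WellFoundedLT X]
    (hX : HalfGraphArrow #X) (R : X → X → Prop) :
    (∃ H : Set X, ¬H.Countable ∧ ∀ x ∈ H, ∀ y ∈ H, x < y → ¬R x y) ∨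
    ∃ A B : Set X, Disjoint A B ∧ (∀ b ∈ B, ∃ a ∈ A, b < a) ∧
      ¬(firstAfter A B).Countable ∧ ¬(firstAfter B A).Countable ∧
      ∀ x ∈ A, ∀ y ∈ B, x < y → R x y := by
  classical
  let f : X → Ordinal.{u} := typein (· < ·)
  have hf : StrictMono f := fun _ _ => (typein_lt_typein _).2
  have hrange : Iio (#X).ord ⊆ range f :=
    fun _ ho => typein_surj _ (ho.trans_le (ord_card_le _))
  let k : Ordinal.{u} → Ordinal.{u} → Fin 2 :=
    fun α β => if ∃ x y, f x = α ∧ f y = β ∧ R x y then 1 else 0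
  have hk : ∀ x y, k (f x) (f y) = if R x y then 1 else 0 := by
    simp [k, hf.injective.eq_iff]
  rcases hX k with ⟨H, hHX, hH, hH0⟩ | ⟨A, B, hAX, hBX, hAB, hA, hB, hsup, hAB1⟩
  · refine .inl ⟨f ⁻¹' H, fun hc => ?_, fun x hx y hy hxy => ?_⟩
    · refine not_countable_of_mk_eq_aleph_one hH ?_
      simpa [image_preimage_eq_of_subset (hHX.trans hrange)] using hc.image f
    · simpa [hk] using hH0 (f x) hx (f y) hy (hf hxy)
  · have hAf := hAX.trans hrange
    have hBf := hBX.trans hrange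
    refine .inr ⟨f ⁻¹' A, f ⁻¹' B, hAB.preimage f, hB.exists_gt_preimage hf hA hBf hAf hsup.symm,
      not_countable_firstAfter_preimage hf hA hB hAf hBf hsup,
      not_countable_firstAfter_preimage hf hB hA hBf hAf hsup.symm, fun x hx y hy hxy => ?_⟩
    simpa [hk] using hAB1 (f x) hx (f y) hy (hf hxy)

section Separated

variable {X : Type u} [TopologicalSpace X]

theorem StronglyRightSeparated.exists_uncountable_discrete (hsep : StronglyRightSeparated X)
    (hX : HalfGraphArrow #X) : ∃ D : Set X, ¬D.Countable ∧ DiscreteTopology D := by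
  obtain ⟨r, hr, W, hW⟩ := hsep
  let := IsWellOrder.linearOrder r
  have : WellFoundedLT X := ⟨hr.wf⟩
  choose hWc hWx hWr using hW
  have hWn : ∀ x, W x ∈ 𝓝 x := fun x => mem_interior_iff_mem_nhds.1 (hWx x)
  rcases hX.homogeneous_or_halfGraph (fun x y => x ∈ W y) with
    ⟨H, hH, hH0⟩ | ⟨A, B, hAB, -, -, hD, hAB1⟩
  · refine ⟨H, hH, discreteTopology_of_forall_exists_mem_nhds fun x hx =>
      ⟨W x, hWn x, fun y hy hyx => le_antisymm ?_ ?_⟩⟩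
    · exact not_lt.1 fun h => hWr x y h hyx
    · exact not_lt.1 fun h => hH0 y hy x hx h hyx
  · refine ⟨_, hD, discreteTopology_of_forall_exists_mem_nhds fun x hx => ?_⟩
    obtain ⟨b, hb, hbx, hb'⟩ := exists_mem_lt_of_mem_firstAfter hAB.symm hx
    refine ⟨W x ∩ (W b)ᶜ, inter_mem (hWn x) ((hWc b).isOpen_compl.mem_nhds (hWr b x hbx)),
      fun y hy hyW => le_antisymm ?_ ?_⟩
    · exact not_lt.1 fun h => hWr x y h hyW.1
    · have hyA := firstAfter_subset hy
      exact not_lt.1 fun h => hyW.2 (hAB1 y hyA b hb (hb' y hyA h))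

theorem StronglyLeftSeparated.exists_uncountable_discrete (hsep : StronglyLeftSeparated X)
    (hX : HalfGraphArrow #X) : ∃ D : Set X, ¬D.Countable ∧ DiscreteTopology D := by
  obtain ⟨r, hr, W, hW⟩ := hsep
  let := IsWellOrder.linearOrder r
  have : WellFoundedLT X := ⟨hr.wf⟩
  choose hWc hWx hWl using hW
  have hWn : ∀ x, W x ∈ 𝓝 x := fun x => mem_interior_iff_mem_nhds.1 (hWx x)
  rcases hX.homogeneous_or_halfGraph (fun x y => y ∈ W x) with
    ⟨H, hH, hH0⟩ | ⟨A, B, hAB, hBA, hD, -, hAB1⟩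
  · refine ⟨H, hH, discreteTopology_of_forall_exists_mem_nhds fun x hx =>
      ⟨W x, hWn x, fun y hy hyx => le_antisymm ?_ ?_⟩⟩
    · exact not_lt.1 fun h => hH0 x hx y hy h hyx
    · exact not_lt.1 fun h => hWl x y h hyx
  · refine ⟨_, hD, discreteTopology_of_forall_exists_mem_nhds fun x hx => ?_⟩
    have hxB := firstAfter_subset hx
    obtain ⟨a, ha, hxa, ha'⟩ := exists_mem_gt_forall_firstAfter hAB hxB (hBA x hxB)
    refine ⟨W x ∩ (W a)ᶜ, inter_mem (hWn x) ((hWc a).isOpen_compl.mem_nhds (hWl a x hxa)),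
      fun y hy hyW => le_antisymm ?_ ?_⟩
    · exact not_lt.1 fun h => hyW.2 (hAB1 a ha y (firstAfter_subset hy) (ha' y hy h))
    · exact not_lt.1 fun h => hWl x y h hyW.1

end Separated

/-- If `κ → (ω₁, (ω₁;ω₁))` holds, then every strongly separated topological space of
cardinality `κ` contains an uncountable discrete subspace. -/
theorem stmt0 (κ : Cardinal.{u}) (hκ : HalfGraphArrow κ)
    (X : Type u) [TopologicalSpace X] (hX : Cardinal.mk X = κ)
    (hsep : StronglySeparated X) :
    ∃ D : Set X, ¬ D.Countable ∧ DiscreteTopology D := by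
  subst hX
  rcases hsep with hL | hR
  exacts [hL.exists_uncountable_discrete hκ, hR.exists_uncountable_discrete hκ]
end

section
/- Let X be a topological space, ≺ a well-ordering of X, and for each x ∈ X let W_x be a closed neighborhood of x (a closed set containing x in its interior) such that y ∉ W_x whenever y ≺ x. Suppose a, b : ω₁ → X are sequences such that b_η ∈ W_{a_ξ} whenever ξ ≤ η < ω₁, and b_ξ ≺ a_δ whenever ξ < δ < ω₁. Then (b_ξ)_{ξ<ω₁} is a free sequence: for every δ < ω₁ the closure of {b_ξ : ξ < δ} is disjoint from the closure of {b_ξ : δ ≤ ξ < ω₁}. Consequently, b is injective and {b_ξ : ξ < ω₁} is an uncountable discrete subspace of X. -/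
/-!
If `x` is a limit of points `b ξ`, `ξ < δ`, then some `b ξ` lies in the neighbourhood `W x`, so
`b ξ` is not below `x`; as `b ξ` is below `a δ`, so is `x`, hence `x ∉ W (a δ)`. But the closed set
`W (a δ)` contains the whole tail `{b η : δ ≤ η}` and hence its closure. Freeness gives injectivity
and discreteness at once: `b δ` is separated from `{b ξ : ξ < δ}` and from `{b ξ : δ < ξ}`.
-/

universe u

open Set

/-- The first uncountable ordinal `ω₁`. -/
noncomputable def omega1 : Ordinal.{0} := (Cardinal.aleph 1).ord

section WellOrderedNeighbourhoods

variable {X : Type u} [TopologicalSpace X] {r : X → X → Prop} [Std.Trichotomous r] [IsTrans X r]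
  {W : X → Set X}

theorem disjoint_closure_of_forall_rel (hWnbhd : ∀ x : X, x ∈ interior (W x))
    (hWsep : ∀ x y : X, r y x → y ∉ W x) {S : Set X} {y : X} (hS : ∀ s ∈ S, r s y) :
    Disjoint (closure S) (W y) := by
  rw [disjoint_left]
  intro x hxS hxW
  obtain ⟨s, hsW, hs⟩ := mem_closure_iff.mp hxS _ isOpen_interior (hWnbhd x)
  have hsx : ¬ r s x := fun h => hWsep x s h (interior_subset hsW)
  have hxy : ¬ r x y := fun h => hWsep y x h hxW
  rcases trichotomous_of r s x with h | rfl | h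
  · exact hsx h
  · exact hxy (hS s hs)
  · exact hxy (_root_.trans h (hS s hs))

theorem disjoint_closure_closure_of_forall_rel (hWcl : ∀ x : X, IsClosed (W x))
    (hWnbhd : ∀ x : X, x ∈ interior (W x)) (hWsep : ∀ x y : X, r y x → y ∉ W x)
    {S T : Set X} {y : X} (hS : ∀ s ∈ S, r s y) (hT : T ⊆ W y) :
    Disjoint (closure S) (closure T) :=
  (disjoint_closure_of_forall_rel hWnbhd hWsep hS).mono_right (closure_minimal hT (hWcl y))

end WellOrderedNeighbourhoods

namespace Ordinal

variable {X : Type u} [TopologicalSpace X]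

def IsFreeSeq (b : Ordinal → X) (o : Ordinal) : Prop :=
  ∀ δ < o, Disjoint (closure (b '' Iio δ)) (closure (b '' Ico δ o))

namespace IsFreeSeq

variable {b : Ordinal → X} {o : Ordinal}

theorem ne_of_lt (hb : IsFreeSeq b o) {ξ η : Ordinal} (hξη : ξ < η) (hη : η < o) :
    b ξ ≠ b η :=
  (hb η hη).ne_of_mem (subset_closure (mem_image_of_mem b hξη))
    (subset_closure (mem_image_of_mem b ⟨le_rfl, hη⟩))

theorem injOn (hb : IsFreeSeq b o) : InjOn b (Iio o) := by
  intro ξ hξ η hη heq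
  by_contra hne
  rcases lt_or_gt_of_ne hne with h | h
  · exact hb.ne_of_lt h hη heq
  · exact hb.ne_of_lt h hξ heq.symm

theorem discreteTopology (hb : IsFreeSeq b o) (ho : Order.IsSuccPrelimit o) :
    DiscreteTopology (b '' Iio o) := by
  rw [discreteTopology_iff_isOpen_singleton]
  rintro ⟨_, δ, hδ, rfl⟩
  have hδ1 : δ + 1 < o := ho.succ_lt hδ
  let U : Set X := (closure (b '' Iio δ))ᶜ ∩ (closure (b '' Ico (δ + 1) o))ᶜ
  have hU : IsOpen U := isClosed_closure.isOpen_compl.inter isClosed_closure.isOpen_compl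
  suffices ({⟨b δ, δ, hδ, rfl⟩} : Set (b '' Iio o)) = Subtype.val ⁻¹' U from
    this ▸ hU.preimage continuous_subtype_val
  ext ⟨_, η, hη, rfl⟩
  simp only [mem_singleton_iff, Subtype.ext_iff, mem_preimage, U, mem_inter_iff, mem_compl_iff]
  constructor
  · intro h
    rw [h]
    exact ⟨(hb δ hδ).notMem_of_mem_right (subset_closure (mem_image_of_mem b ⟨le_rfl, hδ⟩)),
      (hb (δ + 1) hδ1).notMem_of_mem_left
        (subset_closure (mem_image_of_mem b (Order.lt_add_one_iff.mpr le_rfl : δ < δ + 1)))⟩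
  · rintro ⟨hlow, hhigh⟩
    rcases lt_trichotomy η δ with h | rfl | h
    · exact absurd (subset_closure (mem_image_of_mem b h)) hlow
    · rfl
    · exact absurd (subset_closure (mem_image_of_mem b
        (show η ∈ Ico (δ + 1) o from ⟨Order.add_one_le_of_lt h, hη⟩))) hhigh

end IsFreeSeq

end Ordinal

theorem isSuccPrelimit_omega1 : Order.IsSuccPrelimit omega1 :=
  (Cardinal.isSuccLimit_ord (Cardinal.aleph0_le_aleph 1)).isSuccPrelimit

theorem not_countable_Iio_omega1 : ¬ (Iio omega1).Countable := by
  rw [← Cardinal.le_aleph0_iff_set_countable, Cardinal.mk_Iio_ordinal, omega1, Cardinal.card_ord]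
  simp

/-- Let `X` be a topological space, `r` a well-ordering of `X`, and for each `x ∈ X` let
`W x` be a closed neighborhood of `x` (a closed set containing `x` in its interior) such that
`y ∉ W x` whenever `r y x`.  If `a b : ω₁ → X` are sequences such that `b η ∈ W (a ξ)`
whenever `ξ ≤ η < ω₁`, and `r (b ξ) (a δ)` whenever `ξ < δ < ω₁`, then `(b ξ)_{ξ<ω₁}` is a
free sequence: for every `δ < ω₁` the closure of `{b ξ : ξ < δ}` is disjoint from the closure
of `{b ξ : δ ≤ ξ < ω₁}`.  Consequently `b` is injective on `ω₁` and
`{b ξ : ξ < ω₁}` is an uncountable discrete subspace of `X`. -/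
theorem stmt1 {X : Type u} [TopologicalSpace X]
    (r : X → X → Prop) (hwo : IsWellOrder X r)
    (W : X → Set X)
    (hWcl : ∀ x : X, IsClosed (W x)) (hWnbhd : ∀ x : X, x ∈ interior (W x))
    (hWsep : ∀ x y : X, r y x → y ∉ W x)
    (a b : Ordinal.{0} → X)
    (hab : ∀ ξ η : Ordinal.{0}, ξ ≤ η → η < omega1 → b η ∈ W (a ξ))
    (hba : ∀ ξ δ : Ordinal.{0}, ξ < δ → δ < omega1 → r (b ξ) (a δ)) :
    (∀ δ < omega1,
      Disjoint (closure (b '' {ξ : Ordinal | ξ < δ}))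
        (closure (b '' {ξ : Ordinal | δ ≤ ξ ∧ ξ < omega1}))) ∧
    Set.InjOn b (Set.Iio omega1) ∧
    ¬ (b '' Set.Iio omega1).Countable ∧
    DiscreteTopology ↥(b '' Set.Iio omega1) := by
  have := hwo
  have hfree : Ordinal.IsFreeSeq b omega1 := fun δ hδ =>
    disjoint_closure_closure_of_forall_rel hWcl hWnbhd hWsep
      (by rintro _ ⟨ξ, hξ, rfl⟩; exact hba ξ δ hξ hδ)
      (by rintro _ ⟨η, ⟨hδη, hη⟩, rfl⟩; exact hab δ η hδη hη)
  refine ⟨hfree, hfree.injOn, fun hcount => ?_, hfree.discreteTopology isSuccPrelimit_omega1⟩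
  exact not_countable_Iio_omega1 ((mapsTo_image b _).countable_of_injOn hfree.injOn hcount)
end

section
/- Assume 2^λ = 𝔠 for every infinite cardinal λ < 𝔠, and assume that every strongly separated topological space of cardinality 𝔠 contains an uncountable discrete subspace. Then every infinite regular Hausdorff topological space X of countable spread satisfies o(X) = 𝔠, i.e., the family of all open subsets of X has cardinality exactly 𝔠. -/
universe u

open Cardinal

/-! Strongly separated subspaces of size `𝔠` would contain uncountable discrete sets, so there are
none. A recursion of length `𝔠` then gives a dense set `D` with `|D| < 𝔠` (otherwise the points
chosen outside the closures of their predecessors are left separated) and subcovers of size `< 𝔠`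
of open covers of subspaces (otherwise the points chosen outside the cover members of their
predecessors are right separated). By regularity the sets `int cl A`, `A ⊆ D`, form a base of
size `2^|D| ≤ 𝔠`, so every open set is a union of fewer than `𝔠` of them; since `2^λ = 𝔠` for
`λ < 𝔠` makes `𝔠` regular, there are only `𝔠` such families. A sequence of disjoint nonempty
open sets gives `o(X) ≥ 𝔠`. -/

open Set Topology Function

namespace Cardinal

theorem two_power_le_continuum_of_lt
    (hpow : ∀ lam : Cardinal.{u}, ℵ₀ ≤ lam → lam < 𝔠 → (2 : Cardinal) ^ lam = 𝔠)
    {lam : Cardinal.{u}} (h : lam < 𝔠) : (2 : Cardinal) ^ lam ≤ 𝔠 := by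
  rcases le_or_gt ℵ₀ lam with hlam | hlam
  · exact (hpow lam hlam h).le
  · exact (power_lt_aleph0 (natCast_lt_aleph0 (n := 2)) hlam).le.trans aleph0_le_continuum

theorem isRegular_continuum_of_two_power_le (h : ∀ lam < 𝔠, (2 : Cardinal.{u}) ^ lam ≤ 𝔠) :
    (𝔠 : Cardinal.{u}).IsRegular := by
  refine ⟨aleph0_le_continuum, not_lt.1 fun hcof => ?_⟩
  set lam := max (𝔠 : Cardinal.{u}).ord.cof ℵ₀
  have hlam : lam < 𝔠 := max_lt hcof aleph0_lt_continuum
  -- König's theorem `lam < cof (2 ^ lam)`, where `2 ^ lam = 𝔠`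
  have htwo : (2 : Cardinal) ^ lam = 𝔠 :=
    (h lam hlam).antisymm (two_power_aleph0 ▸ power_le_power_left two_ne_zero (le_max_right _ _))
  have := lt_cof_ord_power (le_max_right (𝔠 : Cardinal.{u}).ord.cof ℵ₀) one_lt_two
  rw [htwo] at this
  exact this.not_ge (le_max_left _ _)

variable {κ : Cardinal.{u}}

theorem IsRegular.exists_gt_of_mk_lt (hκ : κ.IsRegular) {s : Set κ.ord.ToType} (hs : #s < κ) :
    ∃ i, ∀ j ∈ s, j < i :=
  not_isCofinal_iff.1 fun hcof =>
    (Order.cof_le hcof).not_gt (by rwa [Ordinal.cof_toType, hκ.cof_ord])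

theorem IsRegular.mk_subtype_mk_lt_le (hκ : κ.IsRegular)
    (h2 : ∀ lam < κ, (2 : Cardinal) ^ lam ≤ κ) {α : Type u} (hα : #α ≤ κ) :
    #{s : Set α // #s < κ} ≤ κ := by
  rw [← mk_ord_toType κ, le_def] at hα
  obtain ⟨g⟩ := hα
  have hsmall : ∀ s : {s : Set α // #s < κ}, g '' s.1 ∈ ⋃ i : κ.ord.ToType, 𝒫 (Iio i) := by
    rintro ⟨s, hs⟩
    obtain ⟨i, hi⟩ := hκ.exists_gt_of_mk_lt (mk_image_le.trans_lt hs)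
    exact mem_iUnion.2 ⟨i, fun j hj => hi j hj⟩
  calc #{s : Set α // #s < κ}
      ≤ #(⋃ i : κ.ord.ToType, 𝒫 (Iio i)) :=
        mk_le_of_injective (f := fun s => ⟨g '' s.1, hsmall s⟩) fun s t hst =>
          Subtype.ext (image_injective.2 g.injective (congrArg Subtype.val hst))
    _ ≤ #κ.ord.ToType * ⨆ i : κ.ord.ToType, #(𝒫 (Iio i)) := mk_iUnion_le _
    _ ≤ κ * κ := by
        rw [mk_ord_toType]
        gcongr
        exact ciSup_le' fun i =>
          (mk_powerset _).trans_le (h2 _ (by simpa using mk_Iio_lt i (by simp)))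
    _ = κ := mul_eq_self hκ.aleph0_le

end Cardinal

theorem exists_injective_forall_notMem_image_Iio {X : Type u} (κ : Cardinal.{u}) (Y : Set X)
    (B : Set X → Set X) (hB : ∀ S ⊆ Y, S ⊆ B S)
    (hY : ∀ S ⊆ Y, #S < κ → ∃ x ∈ Y, x ∉ B S) :
    ∃ f : κ.ord.ToType → X, Injective f ∧ (∀ i, f i ∈ Y) ∧ ∀ i, f i ∉ B (f '' Iio i) := by
  rcases eq_or_ne κ 0 with rfl | hκ
  · have : IsEmpty (ord 0).ToType := mk_eq_zero_iff.1 (mk_ord_toType 0)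
    exact ⟨isEmptyElim, fun i => isEmptyElim i, isEmptyElim, isEmptyElim⟩
  have : Nonempty X := by
    obtain ⟨x, -⟩ := hY ∅ (empty_subset Y) (by simpa [pos_iff_ne_zero])
    exact ⟨x⟩
  let f : κ.ord.ToType → X := wellFounded_lt.fix fun i g =>
    Classical.epsilon fun x => x ∈ Y ∧ x ∉ B (range fun j : Iio i => g j j.2)
  have hf : ∀ i, f i ∈ Y ∧ f i ∉ B (f '' Iio i) := by
    intro i
    induction i using WellFoundedLT.induction with
    | _ i ih =>
      have hfix : f i = Classical.epsilon fun x => x ∈ Y ∧ x ∉ B (f '' Iio i) := by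
        rw [image_eq_range]
        exact wellFounded_lt.fix_eq _ i
      have hsub : f '' Iio i ⊆ Y := by
        rintro _ ⟨j, hj, rfl⟩
        exact (ih j hj).1
      rw [hfix]
      exact Classical.epsilon_spec
        (hY _ hsub (mk_image_le.trans_lt (by simpa using mk_Iio_lt i (by simp))))
  refine ⟨f, Injective.of_lt_imp_ne fun i j hij hfij => (hf j).2 ?_, fun i => (hf i).1,
    fun i => (hf i).2⟩
  refine hB _ ?_ ⟨i, hij, hfij⟩
  rintro _ ⟨k, -, rfl⟩
  exact (hf k).1

section Topology

variable {X : Type u} [TopologicalSpace X]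

theorem stronglyLeftSeparated_range {ι : Type*} [LinearOrder ι] [WellFoundedLT ι] {f : ι → X}
    (hf : Injective f) {W : ι → Set X} (hWc : ∀ i, IsClosed (W i)) (hWn : ∀ i, W i ∈ 𝓝 (f i))
    (hW : ∀ i j, j < i → f j ∉ W i) : StronglyLeftSeparated (range f) := by
  set e := Equiv.ofInjective f hf
  have he : ∀ a, f (e.symm a) = a := Equiv.apply_ofInjective_symm hf
  refine ⟨e.symm ⁻¹'o (· < ·), inferInstance, fun a => Subtype.val ⁻¹' W (e.symm a),
    fun a => ⟨(hWc _).preimage continuous_subtype_val, ?_, fun b hb => ?_⟩⟩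
  · refine mem_interior_iff_mem_nhds.2 (continuous_subtype_val.continuousAt.preimage_mem_nhds ?_)
    simpa [he] using hWn (e.symm a)
  · simpa [he] using hW _ _ hb

theorem stronglyRightSeparated_range {ι : Type*} [LinearOrder ι] [WellFoundedLT ι] {f : ι → X}
    (hf : Injective f) {W : ι → Set X} (hWc : ∀ i, IsClosed (W i)) (hWn : ∀ i, W i ∈ 𝓝 (f i))
    (hW : ∀ i j, i < j → f j ∉ W i) : StronglyRightSeparated (range f) := by
  set e := Equiv.ofInjective f hf
  have he : ∀ a, f (e.symm a) = a := Equiv.apply_ofInjective_symm hf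
  refine ⟨e.symm ⁻¹'o (· < ·), inferInstance, fun a => Subtype.val ⁻¹' W (e.symm a),
    fun a => ⟨(hWc _).preimage continuous_subtype_val, ?_, fun b hb => ?_⟩⟩
  · refine mem_interior_iff_mem_nhds.2 (continuous_subtype_val.continuousAt.preimage_mem_nhds ?_)
    simpa [he] using hWn (e.symm a)
  · simpa [he] using hW _ _ hb

variable {κ : Cardinal.{u}}

theorem exists_dense_mk_lt [RegularSpace X]
    (h : ∀ S : Set X, #S = κ → ¬ StronglyLeftSeparated S) : ∃ D : Set X, #D < κ ∧ Dense D := by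
  by_contra! hD
  obtain ⟨f, hf, -, hfB⟩ := exists_injective_forall_notMem_image_Iio κ univ closure
    (fun S _ => subset_closure) fun S _ hS => by
      simpa [Dense] using hD S hS
  choose W hWn hWc hWsub using fun i =>
    exists_mem_nhds_isClosed_subset (isClosed_closure.isOpen_compl.mem_nhds (hfB i))
  refine h (range f) (by rw [mk_range_eq f hf, mk_ord_toType]) <|
    stronglyLeftSeparated_range hf hWc hWn fun i j hji hfj => hWsub i hfj ?_
  exact subset_closure ⟨j, hji, rfl⟩

theorem exists_subcover_mk_lt [RegularSpace X]
    (h : ∀ S : Set X, #S = κ → ¬ StronglyRightSeparated S) {Y : Set X} {ι : Type u}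
    {b : Set ι} {c : ι → Set X} (hc : ∀ i ∈ b, IsOpen (c i)) (hY : Y ⊆ ⋃ i ∈ b, c i) :
    ∃ b' ⊆ b, #b' < κ ∧ Y ⊆ ⋃ i ∈ b', c i := by
  by_contra! hno
  choose idx hidx_mem hidx using fun y : Y => mem_iUnion₂.1 (hY y.2)
  obtain ⟨f, hf, hfY, hfB⟩ := exists_injective_forall_notMem_image_Iio κ Y
    (fun S => ⋃ (y : Y) (_ : ↑y ∈ S), c (idx y))
    (fun S hS x hx => mem_iUnion₂.2 ⟨⟨x, hS hx⟩, hx, hidx _⟩) fun S _ hS => by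
      have hsmall : #(idx '' (Subtype.val ⁻¹' S)) < κ :=
        mk_image_le.trans_lt ((mk_preimage_of_injective _ _ Subtype.val_injective).trans_lt hS)
      obtain ⟨x, hxY, hx⟩ :=
        not_subset.1 (hno _ (image_subset_iff.2 fun y _ => hidx_mem y) hsmall)
      refine ⟨x, hxY, fun hxB => hx ?_⟩
      obtain ⟨y, hyS, hxy⟩ := mem_iUnion₂.1 hxB
      exact mem_biUnion (mem_image_of_mem idx hyS) hxy
  choose W hWn hWc hWsub using fun i =>
    exists_mem_nhds_isClosed_subset
      ((hc _ (hidx_mem ⟨f i, hfY i⟩)).mem_nhds (hidx ⟨f i, hfY i⟩))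
  refine h (range f) (by rw [mk_range_eq f hf, mk_ord_toType]) <|
    stronglyRightSeparated_range hf hWc hWn fun i j hij hfj => (hfB j) ?_
  exact mem_iUnion₂.2 ⟨⟨f i, hfY i⟩, ⟨i, hij, rfl⟩, hWsub i hfj⟩

theorem Dense.exists_subset_mem_interior_closure_subset [RegularSpace X] {D U : Set X}
    (hD : Dense D) {x : X} (hU : U ∈ 𝓝 x) :
    ∃ A ⊆ D, x ∈ interior (closure A) ∧ interior (closure A) ⊆ U := by
  obtain ⟨W, hWn, hWc, hWU⟩ := exists_mem_nhds_isClosed_subset hU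
  refine ⟨interior W ∩ D, inter_subset_right, ?_, ?_⟩
  · exact interior_mono (hD.open_subset_closure_inter isOpen_interior)
      (by rwa [interior_interior, mem_interior_iff_mem_nhds])
  · calc interior (closure (interior W ∩ D)) ⊆ closure W :=
          interior_subset.trans (closure_mono (inter_subset_left.trans interior_subset))
      _ ⊆ U := by rwa [hWc.closure_eq]

theorem IsOpen.exists_mk_lt_biUnion_eq [RegularSpace X]
    (h : ∀ S : Set X, #S = κ → ¬ StronglyRightSeparated S) {D : Set X} (hD : Dense D)
    {U : Set X} (hU : IsOpen U) :
    ∃ s : Set (Set D), #s < κ ∧ ⋃ A ∈ s, interior (closure (Subtype.val '' A)) = U := by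
  obtain ⟨s, hsU, hsκ, hUs⟩ := exists_subcover_mk_lt h (Y := U)
    (c := fun A : Set D => interior (closure (Subtype.val '' A)))
    (b := {A | interior (closure (Subtype.val '' A)) ⊆ U}) (fun _ _ => isOpen_interior)
    fun x hx => by
      obtain ⟨A, hAD, hxA, hAU⟩ := hD.exists_subset_mem_interior_closure_subset (hU.mem_nhds hx)
      have hA : Subtype.val '' (Subtype.val ⁻¹' A : Set D) = A := by
        rwa [Subtype.image_preimage_coe, inter_eq_right]
      exact mem_iUnion₂.2 ⟨Subtype.val ⁻¹' A, by simpa [hA], by rwa [hA]⟩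
  exact ⟨s, hsκ, (iUnion₂_subset hsU).antisymm hUs⟩

theorem mk_isOpen_le [RegularSpace X] (hκ : κ.IsRegular)
    (h2 : ∀ lam < κ, (2 : Cardinal) ^ lam ≤ κ)
    (h : ∀ S : Set X, #S = κ → ¬ StronglyRightSeparated S) {D : Set X} (hD : Dense D)
    (hDκ : #D < κ) : #{U : Set X // IsOpen U} ≤ κ := by
  choose s hsκ hsU using fun U : {U : Set X // IsOpen U} => U.2.exists_mk_lt_biUnion_eq h hD
  calc #{U : Set X // IsOpen U}
      ≤ #{s : Set (Set D) // #s < κ} := mk_le_of_injective (f := fun U => ⟨s U, hsκ U⟩)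
        fun U V hUV => Subtype.ext <| (hsU U).symm.trans <| by
          rw [show s U = s V from congrArg Subtype.val hUV, hsU V]
    _ ≤ κ := hκ.mk_subtype_mk_lt_le h2 (by rw [mk_set]; exact h2 _ hDκ)

theorem continuum_le_mk_isOpen [T2Space X] [Infinite X] : 𝔠 ≤ #{U : Set X // IsOpen U} := by
  obtain ⟨U, hUne, hUo, hUd⟩ := exists_seq_infinite_isOpen_pairwise_disjoint X
  have hinj : Injective fun s : Set ℕ => (⟨⋃ n ∈ s, U n, isOpen_biUnion fun n _ => hUo n⟩ :
      {U : Set X // IsOpen U}) := fun s t hst =>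
    hUd.biUnion_injective (fun n => (hUne n).nonempty) (congrArg Subtype.val hst)
  simpa [lift_continuum] using lift_mk_le_lift_mk_of_injective hinj

theorem Set.Countable.of_discreteTopology_subspace
    (hspread : ∀ D : Set X, DiscreteTopology D → D.Countable) {S : Set X} {D : Set S}
    (hD : DiscreteTopology D) : D.Countable :=
  preimage_image_eq D Subtype.val_injective ▸
    (hspread _ (IsDiscrete.image ⟨hD⟩ IsInducing.subtypeVal).to_subtype).preimage
      Subtype.val_injective

end Topology

/-- Assume `2^λ = 𝔠` for every infinite cardinal `λ < 𝔠`, and assume that every strongly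
separated topological space of cardinality `𝔠` contains an uncountable discrete subspace.
Then every infinite regular Hausdorff space `X` of countable spread satisfies `o(X) = 𝔠`:
the family of all open subsets of `X` has cardinality exactly `𝔠`. -/
theorem stmt5 {X : Type u} [TopologicalSpace X] [T2Space X] [RegularSpace X] [Infinite X]
    (hpow : ∀ lam : Cardinal.{u}, ℵ₀ ≤ lam → lam < continuum → (2 : Cardinal) ^ lam = continuum)
    (hss : ∀ (Y : Type u) [TopologicalSpace Y], Cardinal.mk Y = continuum →
      StronglySeparated Y → ∃ D : Set Y, ¬ D.Countable ∧ DiscreteTopology D)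
    (hspread : ∀ D : Set X, DiscreteTopology D → D.Countable) :
    Cardinal.mk {U : Set X // IsOpen U} = continuum := by
  have h2 : ∀ lam < 𝔠, (2 : Cardinal.{u}) ^ lam ≤ 𝔠 := fun _ => two_power_le_continuum_of_lt hpow
  have hsep : ∀ S : Set X, #S = 𝔠 → ¬ StronglySeparated S := fun S hS hS' => by
    obtain ⟨D, hD, hDdisc⟩ := hss S hS hS'
    exact hD (.of_discreteTopology_subspace hspread hDdisc)
  obtain ⟨D, hDκ, hD⟩ := exists_dense_mk_lt fun S hS hS' => hsep S hS (.inl hS')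
  have hupper := mk_isOpen_le (isRegular_continuum_of_two_power_le h2) h2
    (fun S hS hS' => hsep S hS (.inr hS')) hD hDκ
  exact hupper.antisymm continuum_le_mk_isOpen
end

section
/- Assume 2^λ = 𝔠 for every infinite cardinal λ < 𝔠, and assume that every strongly separated topological space of cardinality 𝔠 contains an uncountable discrete subspace. Then every regular Hausdorff hereditarily Lindelöf topological space has a topological basis of cardinality at most 𝔠 (i.e., weight at most 𝔠). -/
universe u

open Cardinal

open Set TopologicalSpace


/-- In a hereditarily Lindelöf space, a set all of whose points are isolated (witnessed by
ambient open sets) is countable. -/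
lemma countable_of_isolated_pts {X : Type u} [TopologicalSpace X] [HereditarilyLindelofSpace X]
    (E : Set X) (h : ∀ x ∈ E, ∃ V : Set X, IsOpen V ∧ V ∩ E = {x}) : E.Countable := by
  classical
  have hL : IsLindelof E := HereditarilyLindelof_LindelofSets E
  choose! V hVo hVE using h
  have hcov : E ⊆ ⋃ x : E, V x := by
    intro x hx
    refine mem_iUnion.2 ⟨⟨x, hx⟩, ?_⟩
    have : x ∈ V x ∩ E := by rw [hVE x hx]; exact rfl
    exact this.1
  obtain ⟨t, htc, hts⟩ := hL.elim_countable_subcover (fun x : E => V x) (fun x => hVo x x.2) hcov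
  have hsub : E ⊆ Subtype.val '' t := by
    intro x hx
    obtain ⟨e, het, hxe⟩ := mem_iUnion₂.1 (hts hx)
    have hx2 : x ∈ V e ∩ E := ⟨hxe, hx⟩
    rw [hVE e e.2] at hx2
    exact ⟨e, het, (mem_singleton_iff.1 hx2).symm⟩
  exact ((htc.image _).mono hsub)

/-- Transfinite construction of a left-separated sequence of length `𝔠`. -/
lemma exists_lsep_seq {X : Type u} [TopologicalSpace X]
    (h : ∀ S : Set X, #S < continuum.{u} → ∃ x, x ∉ closure S) :
    ∃ f : (Cardinal.continuum.{u}).ord.ToType → X,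
      ∀ a, f a ∉ closure (f '' Set.Iio a) := by
  classical
  have key : ∀ (a : (Cardinal.continuum.{u}).ord.ToType) (ih : ∀ b, b < a → X),
      #{x : X | ∃ b, ∃ hb : b < a, ih b hb = x} < continuum.{u} := by
    intro a ih
    have hset : {x : X | ∃ b, ∃ hb : b < a, ih b hb = x}
        = Set.range (fun p : Set.Iio a => ih p.1 p.2) := by
      ext x
      constructor
      · rintro ⟨b, hb, rfl⟩; exact ⟨⟨b, hb⟩, rfl⟩
      · rintro ⟨⟨b, hb⟩, rfl⟩; exact ⟨b, hb, rfl⟩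
    rw [hset]
    exact (Cardinal.mk_range_le).trans_lt (Cardinal.mk_Iio_ord_toType a)
  have wf : WellFounded ((· < ·) : (Cardinal.continuum.{u}).ord.ToType →
      (Cardinal.continuum.{u}).ord.ToType → Prop) := wellFounded_lt
  let F : ∀ a : (Cardinal.continuum.{u}).ord.ToType,
      (∀ b, b < a → X) → X := fun a ih => (h _ (key a ih)).choose
  let f := WellFounded.fix wf F
  refine ⟨f, fun a => ?_⟩
  have hfix : f a = F a (fun b _ => f b) := WellFounded.fix_eq wf F a
  have hspec : F a (fun b _ => f b)
      ∉ closure {x : X | ∃ b, ∃ hb : b < a, f b = x} :=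
    (h _ (key a (fun b _ => f b))).choose_spec
  have himg : {x : X | ∃ b, ∃ hb : b < a, f b = x} = f '' Set.Iio a := by
    ext x
    simp only [Set.mem_image, Set.mem_Iio, Set.mem_setOf_eq]
    exact ⟨fun ⟨b, hb, he⟩ => ⟨b, hb, he⟩, fun ⟨b, hb, he⟩ => ⟨b, hb, he⟩⟩
  rw [hfix, ← himg]
  exact hspec


lemma regOpen_basis {X : Type u} [TopologicalSpace X] [RegularSpace X] :
    TopologicalSpace.IsTopologicalBasis
      {V : Set X | ∃ U : Set X, IsOpen U ∧ V = interior (closure U)} := by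
  refine isTopologicalBasis_of_isOpen_of_nhds ?_ ?_
  · rintro V ⟨U, hU, rfl⟩; exact isOpen_interior
  · intro x u hxu hu
    obtain ⟨t, ht, htc, hts⟩ := exists_mem_nhds_isClosed_subset (hu.mem_nhds hxu)
    refine ⟨interior (closure (interior t)), ⟨interior t, isOpen_interior, rfl⟩, ?_, ?_⟩
    · have hx : x ∈ interior t := mem_interior_iff_mem_nhds.2 ht
      exact interior_maximal subset_closure isOpen_interior hx
    · calc interior (closure (interior t)) ⊆ closure (interior t) := interior_subset
        _ ⊆ t := closure_minimal interior_subset htc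
        _ ⊆ u := hts

lemma regOpen_trace {X : Type u} [TopologicalSpace X] {D : Set X} (hD : Dense D)
    {U U' : Set X} (hU : IsOpen U) (hU' : IsOpen U')
    (h : interior (closure U) ∩ D = interior (closure U') ∩ D) :
    interior (closure U) = interior (closure U') := by
  have key : ∀ W : Set X, IsOpen W → closure (interior (closure W) ∩ D) = closure W := by
    intro W hW
    apply subset_antisymm
    · have : interior (closure W) ∩ D ⊆ closure W := fun x hx => interior_subset hx.1
      simpa using closure_mono this
    · have h1 : W ⊆ interior (closure W) := interior_maximal subset_closure hW
      have h2 : interior (closure W) ⊆ closure (interior (closure W) ∩ D) :=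
        hD.open_subset_closure_inter isOpen_interior
      have := closure_mono (h1.trans h2)
      simpa using this
  have hcl : closure U = closure U' := by
    rw [← key U hU, ← key U' hU', h]
  rw [hcl]

/-- Assume `2^λ = 𝔠` for every infinite cardinal `λ < 𝔠`, and assume that every strongly
separated topological space of cardinality `𝔠` contains an uncountable discrete subspace.
Then every regular Hausdorff hereditarily Lindelöf space has a topological basis of
cardinality at most `𝔠` (i.e., weight at most `𝔠`). -/
theorem stmt7 {X : Type u} [TopologicalSpace X] [T2Space X] [RegularSpace X]
    [HereditarilyLindelofSpace X]
    (hpow : ∀ lam : Cardinal.{u}, ℵ₀ ≤ lam → lam < continuum → (2 : Cardinal) ^ lam = continuum)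
    (hss : ∀ (Y : Type u) [TopologicalSpace Y], Cardinal.mk Y = continuum →
      StronglySeparated Y → ∃ D : Set Y, ¬ D.Countable ∧ DiscreteTopology D) :
    ∃ B : Set (Set X), TopologicalSpace.IsTopologicalBasis B ∧ Cardinal.mk B ≤ continuum := by
  classical
  by_cases hd : ∃ D : Set X, Dense D ∧ #D < continuum.{u}
  · -- case 1 : small dense set
    obtain ⟨D, hD, hDlt⟩ := hd
    set B : Set (Set X) := {V : Set X | ∃ U : Set X, IsOpen U ∧ V = interior (closure U)} with hB
    refine ⟨B, regOpen_basis, ?_⟩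
    have hinj : Function.Injective (fun V : ↥B => {d : ↥D | (d : X) ∈ (V : Set X)}) := by
      rintro ⟨V, U, hU, rfl⟩ ⟨V', U', hU', rfl⟩ hVV'
      simp only [Subtype.mk.injEq]
      apply regOpen_trace hD hU hU'
      ext x
      constructor
      · rintro ⟨hxV, hxD⟩
        have hVV2 : {d : ↥D | (d : X) ∈ interior (closure U)}
            = {d : ↥D | (d : X) ∈ interior (closure U')} := hVV'
        have : (⟨x, hxD⟩ : ↥D) ∈ {d : ↥D | (d : X) ∈ interior (closure U)} := hxV
        rw [hVV2] at this
        exact ⟨this, hxD⟩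
      · rintro ⟨hxV, hxD⟩
        have hVV2 : {d : ↥D | (d : X) ∈ interior (closure U)}
            = {d : ↥D | (d : X) ∈ interior (closure U')} := hVV'
        have : (⟨x, hxD⟩ : ↥D) ∈ {d : ↥D | (d : X) ∈ interior (closure U')} := hxV
        rw [← hVV2] at this
        exact ⟨this, hxD⟩
    have hle : #↥B ≤ #(Set ↥D) := Cardinal.mk_le_of_injective hinj
    refine hle.trans ?_
    rw [Cardinal.mk_set]
    rcases le_or_gt ℵ₀ (#↥D) with h | h
    · exact (hpow _ h hDlt).le
    · calc (2 : Cardinal) ^ #↥D ≤ 2 ^ ℵ₀ :=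
          Cardinal.power_le_power_left two_ne_zero h.le
        _ = continuum := Cardinal.two_power_aleph0
  · -- case 2 : no small dense set; derive a contradiction
    exfalso
    push_neg at hd
    have h2 : ∀ S : Set X, #S < continuum.{u} → ∃ x, x ∉ closure S := by
      intro S hS
      by_contra hc
      push_neg at hc
      exact absurd (hd S (fun x => hc x)) (not_le.2 hS)
    obtain ⟨f, hf⟩ := exists_lsep_seq h2
    have hinj : Function.Injective f := by
      intro a b hab
      by_contra hne
      rcases lt_or_gt_of_ne hne with hlt | hlt
      · exact hf b (by rw [← hab]; exact subset_closure ⟨a, hlt, rfl⟩)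
      · exact hf a (by rw [hab]; exact subset_closure ⟨b, hlt, rfl⟩)
    set Y : Set X := Set.range f with hY
    let e : (Cardinal.continuum.{u}).ord.ToType ≃ ↥Y := Equiv.ofInjective f hinj
    have hval : ∀ y : ↥Y, (y : X) = f (e.symm y) := by
      intro y
      conv_lhs => rw [← e.apply_symm_apply y]
      rfl
    -- closed neighborhoods
    have hW : ∀ y : ↥Y, ∃ K : Set X, IsClosed K ∧ K ∈ nhds (y : X) ∧
        K ⊆ (closure (f '' Set.Iio (e.symm y)))ᶜ := by
      intro y
      have hopen : (closure (f '' Set.Iio (e.symm y)))ᶜ ∈ nhds (y : X) := by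
        refine (isClosed_closure.isOpen_compl).mem_nhds ?_
        rw [hval y]
        exact hf (e.symm y)
      obtain ⟨K, hKn, hKc, hKs⟩ := exists_mem_nhds_isClosed_subset hopen
      exact ⟨K, hKc, hKn, hKs⟩
    choose K hKclosed hKnhds hKsub using hW
    have hsep : StronglyLeftSeparated ↥Y := by
      refine ⟨fun u v => e.symm u < e.symm v, ?_, fun y => Subtype.val ⁻¹' K y, ?_⟩
      · haveI : IsWellOrder (Cardinal.continuum.{u}).ord.ToType (· < ·) := isWellOrder_lt
        exact RelIso.IsWellOrder.preimage (· < ·) e.symm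
      · intro y
        refine ⟨(hKclosed y).preimage continuous_subtype_val, ?_, ?_⟩
        · rw [mem_interior_iff_mem_nhds]
          exact continuous_subtype_val.continuousAt.preimage_mem_nhds (hKnhds y)
        · intro z hz hzK
          have hzin : (z : X) ∈ closure (f '' Set.Iio (e.symm y)) :=
            subset_closure ⟨e.symm z, hz, (hval z).symm⟩
          exact hKsub y hzK hzin
    have hmk : #↥Y = continuum.{u} := by
      rw [hY, Cardinal.mk_range_eq f hinj, Cardinal.mk_toType, Cardinal.card_ord]
    obtain ⟨Dd, hDc, hDdisc⟩ := hss ↥Y hmk (Or.inl hsep)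
    -- push the discrete set down to X
    set E : Set X := Subtype.val '' Dd with hE
    have hEiso : ∀ x ∈ E, ∃ V : Set X, IsOpen V ∧ V ∩ E = {x} := by
      rintro x ⟨y, hy, rfl⟩
      have hopen : IsOpen ({⟨y, hy⟩} : Set ↥Dd) := isOpen_discrete _
      obtain ⟨U, hU, hUeq⟩ := isOpen_induced_iff.1 hopen
      obtain ⟨V, hV, hVeq⟩ := isOpen_induced_iff.1 hU
      refine ⟨V, hV, ?_⟩
      ext w
      constructor
      · rintro ⟨hwV, z, hz, rfl⟩
        have hzU : z ∈ U := by rw [← hVeq]; exact hwV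
        have : (⟨z, hz⟩ : ↥Dd) ∈ Subtype.val ⁻¹' U := hzU
        rw [hUeq] at this
        have : z = y := congrArg Subtype.val this
        simp [this]
      · rintro rfl
        have hyU : y ∈ U := by
          have : (⟨y, hy⟩ : ↥Dd) ∈ ({⟨y, hy⟩} : Set ↥Dd) := rfl
          rw [← hUeq] at this
          exact this
        have : (y : X) ∈ V := by rw [← hVeq] at hyU; exact hyU
        exact ⟨this, y, hy, rfl⟩
    have hEc : E.Countable := countable_of_isolated_pts E hEiso
    have : Dd.Countable := by
      have := hEc.preimage (Subtype.val_injective : Function.Injective (Subtype.val : ↥Y → X))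
      exact this.mono (fun z hz => Set.mem_preimage.2 (⟨z, hz, rfl⟩ : (z : X) ∈ E))
    exact hDc this
end

section
/- Let k be a coloring of the two-element subsets of the ordinals below 𝔠 with colors {0,1}. Suppose there exists a set S of ordinals below 𝔠 with |S| = 𝔠 such that for every countable A ⊆ S there is an ordinal β < 𝔠 with α < β for all α ∈ A and k({α,β}) = 1 for all α ∈ A. Then there exist disjoint sets A, B of ordinals below 𝔠, each of order type ω₁, with sup A = sup B, such that k({α,β}) = 1 for all α ∈ A, β ∈ B with α < β (i.e., there is an (ω₁;ω₁)-type half graph homogeneous in color 1). -/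
/-!
By recursion on `ξ < ω₁` choose `b ξ` to be a witness of the hypothesis for the countable set
`{a η | η < ξ} ⊆ S`, and `a ξ ∈ S` above `b ξ`; this is possible because a subset of `𝔠.ord` of
cardinality `𝔠` is unbounded in it. Then `b 0 < a 0 < b 1 < a 1 < ⋯`, so the two ranges are
disjoint, of order type `ω₁` and cofinal in each other, and `a η < b ξ` holds exactly when
`η < ξ`, in which case `k (a η) (b ξ) = 1`.
-/

universe u

open Cardinal

open Set Order

theorem hasOrderTypeOmega1_image {f : Ordinal.{u} → Ordinal.{u}}
    (hf : StrictMonoOn f (Iio (aleph 1).ord)) : HasOrderTypeOmega1 (f '' Iio (aleph 1).ord) := by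
  rw [HasOrderTypeOmega1, ← (hf.orderIso f _).toRelIsoLT.ordinalType_congr, Ordinal.type_lt_Iio,
    lift_ord, lift_aleph, Ordinal.lift_one]

theorem exists_mem_gt_of_lift_le_mk {c : Cardinal.{u}} (hc : ℵ₀ ≤ c) {S : Set Ordinal.{u}}
    (hS : lift.{u + 1} c ≤ #S) {γ : Ordinal.{u}} (hγ : γ < c.ord) : ∃ s ∈ S, γ < s := by
  by_contra! hbdd
  have hsucc : (succ γ).card < c := lt_ord.mp ((isSuccLimit_ord hc).succ_lt hγ)
  have hsub : S ⊆ Iio (succ γ) := fun s hs => lt_succ_iff.mpr (hbdd s hs)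
  have := hS.trans (mk_le_mk_of_subset hsub)
  rw [mk_Iio_ordinal, lift_le] at this
  exact this.not_gt hsucc

theorem countable_Iio_of_lt_aleph_one_ord {ξ : Ordinal.{u}} (hξ : ξ < (aleph 1).ord) :
    (Iio ξ).Countable := by
  rw [← le_aleph0_iff_set_countable, mk_Iio_ordinal, lift_le_aleph0, ← lt_aleph_one_iff]
  exact lt_ord.mp hξ

noncomputable def transfiniteSeq (F : Set Ordinal.{u} → Ordinal.{u}) (ξ : Ordinal.{u}) :
    Ordinal.{u} :=
  F (range fun η : Iio ξ => transfiniteSeq F η)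
termination_by ξ
decreasing_by exact η.2

theorem transfiniteSeq_eq (F : Set Ordinal.{u} → Ordinal.{u}) (ξ : Ordinal.{u}) :
    transfiniteSeq F ξ = F (transfiniteSeq F '' Iio ξ) := by
  rw [transfiniteSeq, image_eq_range]

def Interleaved (o : Ordinal.{u}) (a b : Ordinal.{u} → Ordinal.{u}) : Prop :=
  ∀ ξ < o, b ξ < a ξ ∧ ∀ η < ξ, a η < b ξ

namespace Interleaved

variable {o : Ordinal.{u}} {a b : Ordinal.{u} → Ordinal.{u}}

theorem strictMonoOn_left (h : Interleaved o a b) : StrictMonoOn a (Iio o) :=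
  fun η _ ξ hξ hηξ => ((h ξ hξ).2 η hηξ).trans (h ξ hξ).1

theorem strictMonoOn_right (h : Interleaved o a b) : StrictMonoOn b (Iio o) :=
  fun η hη ξ hξ hηξ => (h η hη).1.trans ((h ξ hξ).2 η hηξ)

theorem apply_right_lt_apply_left (h : Interleaved o a b) {η ξ : Ordinal.{u}} (hη : η < o)
    (hξη : ξ ≤ η) : b ξ < a η :=
  (h ξ (hξη.trans_lt hη)).1.trans_le (h.strictMonoOn_left.monotoneOn (hξη.trans_lt hη) hη hξη)

theorem apply_left_lt_apply_right_iff (h : Interleaved o a b) {η ξ : Ordinal.{u}} (hη : η < o)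
    (hξ : ξ < o) : a η < b ξ ↔ η < ξ :=
  ⟨fun hab => not_le.mp fun hξη => (h.apply_right_lt_apply_left hη hξη).not_gt hab,
    (h ξ hξ).2 η⟩

theorem disjoint_image (h : Interleaved o a b) : Disjoint (a '' Iio o) (b '' Iio o) := by
  refine disjoint_left.mpr ?_
  rintro _ ⟨η, hη, rfl⟩ ⟨ξ, hξ, hba⟩
  rcases lt_or_ge η ξ with hηξ | hξη
  · exact ((h ξ hξ).2 η hηξ).ne' hba
  · exact (h.apply_right_lt_apply_left hη hξη).ne hba

theorem sSup_image_eq (h : Interleaved o a b) (ho : IsSuccLimit o) :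
    sSup (a '' Iio o) = sSup (b '' Iio o) := by
  have hne (f : Ordinal.{u} → Ordinal.{u}) : (f '' Iio o).Nonempty := ⟨f 0, 0, ho.bot_lt, rfl⟩
  apply le_antisymm
  · refine csSup_le (hne a) ?_
    rintro _ ⟨ξ, hξ, rfl⟩
    have hsucc : succ ξ < o := ho.succ_lt hξ
    exact ((h _ hsucc).2 ξ (lt_succ ξ)).le.trans
      (le_csSup Ordinal.bddAbove_of_small (mem_image_of_mem b hsucc))
  · refine csSup_le (hne b) ?_
    rintro _ ⟨ξ, hξ, rfl⟩
    exact (h ξ hξ).1.le.trans (le_csSup Ordinal.bddAbove_of_small (mem_image_of_mem a hξ))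

end Interleaved

theorem exists_interleaved_of_forall_countable {R : Ordinal.{u} → Ordinal.{u} → Prop}
    {S : Set Ordinal.{u}} {δ : Ordinal.{u}} (hunb : ∀ γ < δ, ∃ s ∈ S, γ < s)
    (hS : ∀ A ⊆ S, A.Countable → ∃ β < δ, (∀ α ∈ A, α < β) ∧ ∀ α ∈ A, R α β) :
    ∃ a b : Ordinal.{u} → Ordinal.{u}, Interleaved (aleph 1).ord a b ∧
      ∀ ξ < (aleph 1).ord, a ξ ∈ S ∧ b ξ < δ ∧ ∀ η < ξ, R (a η) (b ξ) := by
  -- Quantified over all `A`, so that `choose` below yields total functions `next` and `witness`.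
  have hstep (A : Set Ordinal.{u}) : ∃ s β : Ordinal.{u}, A ⊆ S → A.Countable →
      s ∈ S ∧ β < s ∧ β < δ ∧ (∀ α ∈ A, α < β) ∧ ∀ α ∈ A, R α β := by
    by_cases hA : A ⊆ S ∧ A.Countable
    · obtain ⟨β, hβδ, hlt, hR⟩ := hS A hA.1 hA.2
      obtain ⟨s, hs, hβs⟩ := hunb β hβδ
      exact ⟨s, β, fun _ _ => ⟨hs, hβs, hβδ, hlt, hR⟩⟩
    · exact ⟨0, 0, fun h₁ h₂ => (hA ⟨h₁, h₂⟩).elim⟩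
  choose next witness hnext using hstep
  set a := transfiniteSeq next
  have ha (ξ : Ordinal.{u}) : a ξ = next (a '' Iio ξ) := transfiniteSeq_eq next ξ
  have hsub (ξ : Ordinal.{u}) (hξ : ξ < (aleph 1).ord) : a '' Iio ξ ⊆ S := by
    induction ξ using WellFoundedLT.induction with
    | _ ξ ih =>
      rintro _ ⟨η, hη, rfl⟩
      have hη₁ := hη.trans hξ
      rw [ha]
      exact (hnext _ (ih η hη hη₁) ((countable_Iio_of_lt_aleph_one_ord hη₁).image a)).1
  have hspec (ξ : Ordinal.{u}) (hξ : ξ < (aleph 1).ord) := ha ξ ▸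
    hnext (a '' Iio ξ) (hsub ξ hξ) ((countable_Iio_of_lt_aleph_one_ord hξ).image a)
  refine ⟨a, fun ξ => witness (a '' Iio ξ), fun ξ hξ => ?_, fun ξ hξ => ?_⟩ <;>
    obtain ⟨haS, hba, hbδ, hlt, hR⟩ := hspec ξ hξ
  · exact ⟨hba, fun η hη => hlt _ (mem_image_of_mem a hη)⟩
  · exact ⟨haS, hbδ, fun η hη => hR _ (mem_image_of_mem a hη)⟩

/-- Let `k` be a 2-coloring of the pairs of ordinals below `𝔠` (the initial ordinal of the
continuum).  If there is a set `S` of ordinals below `𝔠` of cardinality `𝔠` such that for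
every countable `A ⊆ S` there is an ordinal `β < 𝔠` above all elements of `A` with
`k {α, β} = 1` for all `α ∈ A`, then there are disjoint sets `A, B` of ordinals below `𝔠`,
each of order type `ω₁`, with `sup A = sup B`, such that `k {α, β} = 1` whenever `α ∈ A`,
`β ∈ B`, `α < β` (an `(ω₁;ω₁)`-type half graph homogeneous in color `1`). -/
theorem stmt8 (k : Ordinal.{u} → Ordinal.{u} → Fin 2)
    (S : Set Ordinal.{u}) (hSsub : S ⊆ Set.Iio continuum.{u}.ord)
    (hScard : Cardinal.mk S = continuum)
    (hS : ∀ A ⊆ S, A.Countable → ∃ β < continuum.{u}.ord,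
        (∀ α ∈ A, α < β) ∧ ∀ α ∈ A, k α β = 1) :
    ∃ A B : Set Ordinal.{u}, A ⊆ Set.Iio continuum.{u}.ord ∧ B ⊆ Set.Iio continuum.{u}.ord ∧
      Disjoint A B ∧ HasOrderTypeOmega1 A ∧ HasOrderTypeOmega1 B ∧ sSup A = sSup B ∧
      ∀ α ∈ A, ∀ β ∈ B, α < β → k α β = 1 := by
  have hunb (γ) (hγ : γ < continuum.{u}.ord) : ∃ s ∈ S, γ < s :=
    exists_mem_gt_of_lift_le_mk aleph0_le_continuum (lift_continuum.trans hScard.symm).le hγ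
  obtain ⟨a, b, hab, hmem⟩ := exists_interleaved_of_forall_countable hunb hS
  refine ⟨a '' Iio _, b '' Iio _, ?_, ?_, hab.disjoint_image,
    hasOrderTypeOmega1_image hab.strictMonoOn_left, hasOrderTypeOmega1_image hab.strictMonoOn_right,
    hab.sSup_image_eq (isSuccLimit_ord (aleph0_le_aleph 1)), ?_⟩
  · rintro _ ⟨ξ, hξ, rfl⟩
    exact hSsub (hmem ξ hξ).1
  · rintro _ ⟨ξ, hξ, rfl⟩
    exact (hmem ξ hξ).2.1
  · rintro _ ⟨η, hη, rfl⟩ _ ⟨ξ, hξ, rfl⟩ hlt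
    exact (hmem ξ hξ).2.2 η ((hab.apply_left_lt_apply_right_iff hη hξ).1 hlt)
end

section
/- Let ≺ be a strict partial order on the set of ordinals below 𝔠 such that: (a) α ≺ β implies α < β in the ordinal order; (b) for each β, the set {α : α ≺ β} of ≺-predecessors of β is linearly ordered by ≺; (c) every ≺-chain has cardinality less than 𝔠; (d) every ≺-antichain (set of pairwise ≺-incomparable elements) has cardinality less than 𝔠. Define the coloring k on two-element subsets by k({α,β}) = 1 if α and β are ≺-comparable and k({α,β}) = 0 otherwise. Then: (i) there is no set H of ordinals below 𝔠 of cardinality 𝔠 with k constantly 0 on pairs from H; and (ii) there is no set S of ordinals below 𝔠 of cardinality 𝔠 such that for every countable A ⊆ S there is β < 𝔠 with α < β for all α ∈ A and k({α,β}) = 1 for all α ∈ A. In particular, such a (𝔠-Souslin tree) order witnesses the failure of the statement (*). -/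
universe u

open Cardinal

/-- Let `r` be a strict partial order on the ordinals below `𝔠` (the initial ordinal of the
continuum) such that: (a) `r α β` implies `α < β`; (b) the set of `r`-predecessors of any
element is linearly ordered by `r`; (c) every `r`-chain has cardinality `< 𝔠`; and
(d) every `r`-antichain has cardinality `< 𝔠` (i.e. `r` is a `𝔠`-Souslin tree order).
Let `k` be the coloring giving a pair color `1` iff its elements are `r`-comparable.
Then: (i) there is no `0`-homogeneous set of ordinals below `𝔠` of cardinality `𝔠`; and
(ii) there is no set `S` of ordinals below `𝔠` of cardinality `𝔠` such that every countable
`A ⊆ S` admits a `β < 𝔠` above all of `A` with `k {α, β} = 1` for all `α ∈ A`.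
So such an order witnesses the failure of the statement (*). -/
theorem stmt9 (r : Ordinal.{u} → Ordinal.{u} → Prop)
    (hirr : ∀ α, ¬ r α α)
    (htrans : ∀ α β γ, r α β → r β γ → r α γ)
    (ha : ∀ α β, r α β → α < β)
    (hb : ∀ β α₁ α₂, r α₁ β → r α₂ β → (r α₁ α₂ ∨ α₁ = α₂ ∨ r α₂ α₁))
    (hc : ∀ C : Set Ordinal.{u}, C ⊆ Set.Iio continuum.{u}.ord →
      (∀ α ∈ C, ∀ β ∈ C, α ≠ β → (r α β ∨ r β α)) → Cardinal.mk C < continuum)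
    (hd : ∀ A : Set Ordinal.{u}, A ⊆ Set.Iio continuum.{u}.ord →
      (∀ α ∈ A, ∀ β ∈ A, α ≠ β → ¬ r α β ∧ ¬ r β α) → Cardinal.mk A < continuum)
    (k : Ordinal.{u} → Ordinal.{u} → Fin 2)
    (hk : ∀ α β, k α β = 1 ↔ (r α β ∨ r β α)) :
    (¬ ∃ H : Set Ordinal.{u}, H ⊆ Set.Iio continuum.{u}.ord ∧
        Cardinal.mk H = continuum ∧ ∀ α ∈ H, ∀ β ∈ H, α < β → k α β = 0) ∧
    (¬ ∃ S : Set Ordinal.{u}, S ⊆ Set.Iio continuum.{u}.ord ∧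
        Cardinal.mk S = continuum ∧ ∀ A ⊆ S, A.Countable →
          ∃ β < continuum.{u}.ord, (∀ α ∈ A, α < β) ∧ ∀ α ∈ A, k α β = 1) := by
  constructor
  · rintro ⟨H, hHsub, hHcard, hH⟩
    refine absurd hHcard (hd H hHsub ?_).ne
    intro α hα β hβ hne
    rcases lt_or_gt_of_ne hne with h | h
    · have h0 := hH α hα β hβ h
      constructor <;> intro hr
      · have : k α β = 1 := (hk α β).2 (Or.inl hr)
        simp [h0] at this
      · have : k α β = 1 := (hk α β).2 (Or.inr hr)
        simp [h0] at this
    · have h0 := hH β hβ α hα h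
      constructor <;> intro hr
      · have : k β α = 1 := (hk β α).2 (Or.inr hr)
        simp [h0] at this
      · have : k β α = 1 := (hk β α).2 (Or.inl hr)
        simp [h0] at this
  · rintro ⟨S, hSsub, hScard, hS⟩
    refine absurd hScard (hc S hSsub ?_).ne
    intro α hα β hβ hne
    obtain ⟨γ, hγlt, hγab, hγk⟩ := hS {α, β}
      (by intro x hx; simp at hx; rcases hx with rfl | rfl <;> assumption)
      ((Set.countable_singleton _).insert _)
    have hα' : r α γ := by
      rcases (hk α γ).1 (hγk α (by simp)) with h | h
      · exact h
      · exact absurd (ha _ _ h) (not_lt.2 (hγab α (by simp)).le)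
    have hβ' : r β γ := by
      rcases (hk β γ).1 (hγk β (by simp)) with h | h
      · exact h
      · exact absurd (ha _ _ h) (not_lt.2 (hγab β (by simp)).le)
    rcases hb γ α β hα' hβ' with h | h | h
    · exact Or.inl h
    · exact absurd h hne
    · exact Or.inr h
end

section
/- Let κ be a cardinal and let P_κ be the set of partial functions from κ to finite binary sequences with countable domain, ordered by: p ≤ q iff dom(p) ⊇ dom(q), q(α) is an initial segment of p(α) for every α ∈ dom(q), and the set {β ∈ dom(q) : p(β) ≠ q(β)} is finite. Then every antichain in P_κ (a set of conditions that are pairwise incompatible, i.e., pairwise have no common lower bound in this order) has cardinality at most 𝔠 (so P_κ satisfies the 𝔠⁺-chain condition). -/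
universe u

open Cardinal

/-- `Pkappa κ` is the set `P_κ` of partial functions from the ordinals below `κ`
(represented by the canonical type `κ.ord.toType`) to finite binary sequences (elements of
`2^{<ω}`, encoded as `List Bool`) whose domain is countable.  A partial function is encoded
as an `Option`-valued function, its domain being the set where the value is not `none`. -/
def Pkappa (κ : Cardinal.{u}) : Type u :=
  {p : κ.ord.ToType → Option (List Bool) // {α | p α ≠ none}.Countable}

/-- The order on `P_κ`: `p ≤ q` iff `dom p ⊇ dom q`, `q α` is an initial segment of `p α`
for every `α ∈ dom q`, and `p` differs from `q` on only finitely many points of `dom q`. -/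
def PkappaLE {κ : Cardinal.{u}} (p q : Pkappa κ) : Prop :=
  (∀ α s, q.1 α = some s → ∃ t, p.1 α = some t ∧ s <+: t) ∧
    {α | q.1 α ≠ none ∧ p.1 α ≠ q.1 α}.Finite

universe v

open Set Ordinal

/-!
Two conditions that agree on their common domain are compatible (their union is below both), so
it suffices to bound a family `A` of countable partial functions `ι → Option β`, `#β ≤ 𝔠`, any
two of which disagree somewhere on their common domain. Build an increasing `ω₁`-chain of sets
`S_o ⊆ ι` of size `≤ 𝔠`: for each of the `≤ 𝔠 ^ ℵ₀ = 𝔠` restrictions to `S_o` of members of `A`,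
pick one member of `A` realising it, and put its domain into the next stage. These
representatives, over all stages, are at most `𝔠` many. For any `p ∈ A`, the countable set
`dom p ∩ ⋃ S_o` lies in a single `S_o` since `ω₁` is regular, and the representative `q` of the
restriction of `p` to `S_o` agrees with `p` on `dom q ∩ dom p ⊆ S_o`; so `p = q`, and `A`
consists of representatives.
-/

theorem mk_iUnion_le_continuum {α : Type u} {ι : Type v} (f : ι → Set α) (hι : #ι ≤ 𝔠)
    (hf : ∀ i, #(f i) ≤ 𝔠) : #(⋃ i, f i) ≤ 𝔠 := by
  rw [← lift_le_continuum.{u, v}]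
  calc lift.{v} #(⋃ i, f i) ≤ lift.{u} #ι * ⨆ i, lift.{v} #(f i) := mk_iUnion_le_lift f
    _ ≤ 𝔠 * 𝔠 := by
      gcongr
      · exact lift_le_continuum.2 hι
      · exact ciSup_le' fun i => lift_le_continuum.2 (hf i)
    _ = 𝔠 := continuum_mul_self

theorem mk_Iio_le_continuum_of_le_omega_one {o : Ordinal.{0}} (ho : o ≤ ω₁) : #(Iio o) ≤ 𝔠 := by
  rw [Cardinal.mk_Iio_ordinal, lift_le_continuum]
  calc o.card ≤ (ω₁ : Ordinal).card := card_le_card ho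
    _ = ℵ₁ := card_omega 1
    _ ≤ 𝔠 := aleph_one_le_continuum

section TransfiniteIter

variable {ι : Type u} (F : Set ι → Set ι)

noncomputable def transfiniteIter (o : Ordinal.{0}) : Set ι :=
  ⋃ o' : Iio o, (transfiniteIter o' ∪ F (transfiniteIter o'))
termination_by o
decreasing_by exact o'.2

def omegaOneClosure : Set ι := ⋃ o : Iio ω₁, transfiniteIter F o

variable {F}

theorem transfiniteIter_union_subset {o' o : Ordinal.{0}} (h : o' < o) :
    transfiniteIter F o' ∪ F (transfiniteIter F o') ⊆ transfiniteIter F o := by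
  rw [transfiniteIter.eq_1 F o]
  exact subset_iUnion (fun o' : Iio o => transfiniteIter F o' ∪ F (transfiniteIter F o')) ⟨o', h⟩

theorem transfiniteIter_mono : Monotone (transfiniteIter F) := by
  intro o' o h
  rcases h.lt_or_eq with h | rfl
  · exact subset_union_left.trans (transfiniteIter_union_subset h)
  · rfl

theorem mk_transfiniteIter_le_continuum (hF : ∀ S : Set ι, #S ≤ 𝔠 → #(F S) ≤ 𝔠)
    {o : Ordinal.{0}} (ho : o < ω₁) : #(transfiniteIter F o) ≤ 𝔠 := by
  induction o using WellFoundedLT.induction with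
  | _ o ih =>
  rw [transfiniteIter.eq_1]
  refine mk_iUnion_le_continuum _ (mk_Iio_le_continuum_of_le_omega_one ho.le) fun o' => ?_
  have h' := ih o' o'.2 (o'.2.trans ho)
  calc #↥(transfiniteIter F o' ∪ F (transfiniteIter F o')) ≤ 𝔠 + 𝔠 :=
        (mk_union_le _ _).trans (add_le_add h' (hF _ h'))
    _ = 𝔠 := add_eq_self aleph0_le_continuum

theorem apply_transfiniteIter_subset_omegaOneClosure {o : Ordinal.{0}} (ho : o < ω₁) :
    F (transfiniteIter F o) ⊆ omegaOneClosure F :=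
  calc F (transfiniteIter F o) ⊆ transfiniteIter F (o + 1) :=
        subset_union_right.trans (transfiniteIter_union_subset (lt_add_one o))
    _ ⊆ omegaOneClosure F := subset_iUnion (fun o : Iio ω₁ => transfiniteIter F o)
        ⟨o + 1, (isSuccLimit_omega 1).add_one_lt ho⟩

theorem exists_subset_transfiniteIter_of_countable {C : Set ι} (hC : C.Countable)
    (hCF : C ⊆ omegaOneClosure F) : ∃ o < ω₁, C ⊆ transfiniteIter F o := by
  choose f hf using fun c : C => mem_iUnion.1 (hCF c.2)
  have := hC.to_subtype
  refine ⟨⨆ c, (f c : Ordinal), iSup_lt_omega_one fun c => (f c).2, fun c hc => ?_⟩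
  exact transfiniteIter_mono (Ordinal.le_iSup _ ⟨c, hc⟩) (hf ⟨c, hc⟩)

end TransfiniteIter

namespace PartialMap

variable {ι : Type u} {β : Type v}

def dom (p : ι → Option β) : Set ι := {i | p i ≠ none}

def Agree (p q : ι → Option β) : Prop := ∀ i ∈ dom p, i ∈ dom q → p i = q i

def graph (p : ι → Option β) : Set (ι × β) := {x | p x.1 = some x.2}

theorem graph_injective : Function.Injective (graph : (ι → Option β) → Set (ι × β)) := by
  intro p q h
  funext i
  have hi : ∀ b, p i = some b ↔ q i = some b := fun b => Set.ext_iff.1 h (i, b)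
  cases hp : p i with
  | none => cases hq : q i with
    | none => rfl
    | some b => simp [(hi b).2 hq] at hp
  | some b => exact ((hi b).1 hp).symm

theorem countable_graph {p : ι → Option β} (hp : (dom p).Countable) : (graph p).Countable := by
  refine MapsTo.countable_of_injOn (f := Prod.fst) ?_ ?_ hp
  · rintro ⟨i, b⟩ (h : p i = some b)
    simp [dom, h]
  · rintro ⟨i, b⟩ (h : p i = some b) ⟨j, c⟩ (h' : p j = some c) (rfl : i = j)
    simp_all

theorem mk_countable_dom_le_continuum (hι : #ι ≤ 𝔠) (hβ : #β ≤ 𝔠) :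
    #{p : ι → Option β // (dom p).Countable} ≤ 𝔠 := by
  let g : {p : ι → Option β // (dom p).Countable} → {t : Set (ι × β) // #t ≤ ℵ₀} :=
    fun p => ⟨graph p.1, (countable_graph p.2).le_aleph0⟩
  have hg : Function.Injective g := fun p q h =>
    Subtype.ext (graph_injective (congrArg Subtype.val h))
  calc #{p : ι → Option β // (dom p).Countable} ≤ #{t : Set (ι × β) // #t ≤ ℵ₀} :=
        mk_le_of_injective hg
    _ ≤ max #(ι × β) ℵ₀ ^ ℵ₀ := mk_bounded_set_le _ _
    _ ≤ 𝔠 ^ ℵ₀ := by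
      refine power_le_power_right (max_le ?_ aleph0_le_continuum)
      rw [mk_prod]
      exact (mul_le_mul' (lift_le_continuum.2 hι) (lift_le_continuum.2 hβ)).trans
        continuum_mul_self.le
    _ = 𝔠 := continuum_power_aleph0

theorem mk_domRestrict_image_le_continuum {A : Set (ι → Option β)}
    (hdom : ∀ p ∈ A, (dom p).Countable) {S : Set ι} (hS : #S ≤ 𝔠) (hβ : #β ≤ 𝔠) :
    #(S.domRestrict '' A) ≤ 𝔠 := by
  refine (mk_le_mk_of_subset ?_).trans (mk_countable_dom_le_continuum hS hβ)
  rintro _ ⟨p, hp, rfl⟩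
  exact (hdom p hp).preimage Subtype.val_injective

theorem mk_le_continuum_of_pairwise_not_agree (hβ : #β ≤ 𝔠) {A : Set (ι → Option β)}
    (hdom : ∀ p ∈ A, (dom p).Countable) (hA : A.Pairwise fun p q => ¬ Agree p q) : #A ≤ 𝔠 := by
  choose R hRA hR using fun S : Set ι => exists_subset_bijOn A S.domRestrict
  have hR_le : ∀ S : Set ι, #S ≤ 𝔠 → #(R S) ≤ 𝔠 := fun S hS =>
    (hR S).equiv.cardinal_eq.trans_le (mk_domRestrict_image_le_continuum hdom hS hβ)
  let F : Set ι → Set ι := fun S => ⋃ q : R S, dom q.1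
  have hF : ∀ S : Set ι, #S ≤ 𝔠 → #(F S) ≤ 𝔠 := fun S hS =>
    mk_iUnion_le_continuum _ (hR_le S hS) fun q =>
      (hdom q (hRA S q.2)).le_aleph0.trans aleph0_le_continuum
  let B := ⋃ o : Iio ω₁, R (transfiniteIter F o)
  have hB : #B ≤ 𝔠 := mk_iUnion_le_continuum _ (mk_Iio_le_continuum_of_le_omega_one le_rfl)
    fun o => hR_le _ (mk_transfiniteIter_le_continuum hF o.2)
  by_contra! hlt
  obtain ⟨p, hpA, hpB⟩ : ∃ p ∈ A, p ∉ B :=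
    not_subset.1 fun h => ((mk_le_mk_of_subset h).trans hB).not_gt hlt
  obtain ⟨o, ho, hCo⟩ := exists_subset_transfiniteIter_of_countable
    ((hdom p hpA).mono inter_subset_left) (inter_subset_right : dom p ∩ omegaOneClosure F ⊆ _)
  obtain ⟨q, hqR, hqp⟩ := (hR (transfiniteIter F o)).surjOn ⟨p, hpA, rfl⟩
  have hqB : q ∈ B := mem_iUnion.2 ⟨⟨o, ho⟩, hqR⟩
  have hagree : Agree q p := fun i hiq hip =>
    congrFun hqp ⟨i, hCo ⟨hip, apply_transfiniteIter_subset_omegaOneClosure ho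
      (mem_iUnion.2 ⟨⟨q, hqR⟩, hiq⟩)⟩⟩
  exact hA (hRA _ hqR) hpA (fun h => hpB (h ▸ hqB)) hagree

end PartialMap

theorem pkappaLE_of_extends {κ : Cardinal.{u}} {p q : Pkappa κ}
    (h : ∀ α x, q.1 α = some x → p.1 α = some x) : PkappaLE p q := by
  refine ⟨fun α s hs => ⟨s, h α s hs, List.prefix_refl s⟩, finite_empty.subset ?_⟩
  rintro α ⟨hq, hpq⟩
  obtain ⟨x, hx⟩ := Option.ne_none_iff_exists'.1 hq
  exact hpq ((h α x hx).trans hx.symm)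

theorem exists_common_lower_bound_of_agree {κ : Cardinal.{u}} {p q : Pkappa κ}
    (h : PartialMap.Agree p.1 q.1) : ∃ s : Pkappa κ, PkappaLE s p ∧ PkappaLE s q := by
  let s : Pkappa κ := ⟨fun α => (p.1 α).or (q.1 α), (p.2.union q.2).mono fun α hα => by
    by_contra h
    simp_all⟩
  refine ⟨s, pkappaLE_of_extends fun α x hx => by simp [s, hx],
    pkappaLE_of_extends fun α x hx => ?_⟩
  cases hp : p.1 α with
  | none => simp [s, hp, hx]
  | some y =>
    have := h α (by simp [PartialMap.dom, hp]) (by simp [PartialMap.dom, hx])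
    simp_all [s]

/-- Every antichain in `P_κ` (a set of conditions which pairwise have no common lower bound)
has cardinality at most `𝔠`; that is, `P_κ` satisfies the `𝔠⁺`-chain condition. -/
theorem stmt11 (κ : Cardinal.{u}) (A : Set (Pkappa κ))
    (hA : ∀ p ∈ A, ∀ q ∈ A, p ≠ q → ¬ ∃ s : Pkappa κ, PkappaLE s p ∧ PkappaLE s q) :
    Cardinal.mk A ≤ continuum := by
  refine (mk_image_eq (s := A) Subtype.val_injective).symm.trans_le ?_
  refine PartialMap.mk_le_continuum_of_pairwise_not_agree (by simp [aleph0_le_continuum]) ?_ ?_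
  · rintro _ ⟨p, -, rfl⟩
    exact p.2
  · rintro _ ⟨p, hp, rfl⟩ _ ⟨q, hq, rfl⟩ hne hagree
    exact hA p hp q hq (ne_of_apply_ne _ hne) (exists_common_lower_bound_of_agree hagree)
end

section
/- Let κ be an uncountable cardinal that is regular and a strong limit, and assume that every coloring g of the two-element subsets of κ with two colors admits a homogeneous set of cardinality κ. Then for every set S of cardinality less than κ and every function f from the three-element subsets of κ to S, there is a set U ⊆ κ of cardinality κ that is homogeneous for f, i.e., f is constant on the three-element subsets of U. -/
/-!
Write `F a b c` for `f {a, b, c}`. In the Erdős–Rado tree of `F` a node `r` lies below `t` when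
`r < t` and `t` colours every pair of nodes below `r` as `r` does. Two nodes of equal rank colour
the pairs of lower rank differently, so, `κ` being a strong limit, every level has fewer than `κ`
nodes. The partition property for pairs then yields a chain of size `κ` in the tree: colour a pair
by comparing the lexicographic order of the two branches with the well-order; on a homogeneous
set the cones above nodes are convex, and the nodes with a cone of size `κ` form a chain meeting
every level. Along such a chain `F a b c` does not depend on `c`. Doing the same once more for the
induced colouring of pairs and applying the pigeonhole principle for the regular `κ` to the
remaining colouring of points gives the homogeneous set.
-/

universe u

open Cardinal Ordinal Set

theorem Pi.eqOn_Iic_of_toLex_le_of_le {ι : Type*} [LinearOrder ι] [WellFoundedLT ι]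
    {β : Type*} [LinearOrder β] {f g h : ι → β}
    (hfg : toLex f ≤ toLex g) (hgh : toLex g ≤ toLex h) {u : ι} (hfh : EqOn f h (Iic u)) :
    EqOn g f (Iic u) := by
  intro i
  induction i using WellFoundedLT.induction with
  | _ i ih =>
    intro hi
    have hfg_lt : ∀ j < i, f j = g j := fun j hj => (ih j hj (hj.le.trans hi)).symm
    have hgh_lt : ∀ j < i, g j = h j := fun j hj =>
      (hfg_lt j hj).symm.trans (hfh (hj.le.trans hi))
    exact le_antisymm ((apply_le_of_toLex hgh hgh_lt).trans_eq (hfh hi).symm)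
      (apply_le_of_toLex hfg hfg_lt)

theorem IsWellFounded.rank_le_rank_of_subrelation {α : Type u} {r s : α → α → Prop}
    [IsWellFounded α r] [IsWellFounded α s] (h : ∀ ⦃a b⦄, r a b → s a b) (a : α) :
    rank r a ≤ rank s a := by
  induction a using IsWellFounded.induction r with
  | _ a ih =>
    rw [rank_eq r a]
    exact Ordinal.iSup_le fun b =>
      Order.succ_le_of_lt ((ih b b.2).trans_lt (rank_lt_of_rel (h b.2)))

open IsWellFounded (rank rank_lt_of_rel)

class IsTreeOrder {α : Type*} [LT α] (R : α → α → Prop) : Prop where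
  lt_of_rel : ∀ {a b}, R a b → a < b
  rel_trans : ∀ {a b c}, R a b → R b c → R a c
  rel_of_rel_of_rel : ∀ {a b c}, R a c → R b c → a < b → R a b

def IsTreeOrder.branch {α : Type*} (R : α → α → Prop) (t : α) : Set α := {r | r = t ∨ R r t}

namespace IsTreeOrder

variable {α : Type u} [LinearOrder α] {R : α → α → Prop} [IsTreeOrder R]

theorem mem_branch_iff_of_lt {t u s : α} (hu : u ∈ branch R t) (hs : s < u) :
    s ∈ branch R t ↔ R s u := by
  rcases hu with rfl | hut
  · simp [branch, hs.ne]
  · refine ⟨?_, fun hsu => Or.inr (rel_trans hsu hut)⟩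
    rintro (rfl | hst)
    · exact absurd (hs.trans (lt_of_rel hut)) (lt_irrefl _)
    · exact rel_of_rel_of_rel hst hut hs

theorem rel_of_mem_branch {t u w : α} (hu : u ∈ branch R t) (hw : w ∈ branch R t)
    (huw : u < w) : R u w :=
  (mem_branch_iff_of_lt hw huw).1 hu

theorem eqOn_boolIndicator_branch {t u : α} (hu : u ∈ branch R t) :
    EqOn (branch R t).boolIndicator (branch R u).boolIndicator (Iic u) := by
  intro s hs
  rw [Bool.eq_iff_iff, ← mem_iff_boolIndicator, ← mem_iff_boolIndicator]
  rcases hs.lt_or_eq with hs | rfl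
  · rw [mem_branch_iff_of_lt hu hs, mem_branch_iff_of_lt (Or.inl rfl) hs]
  · exact iff_of_true hu (Or.inl rfl)

variable [WellFoundedLT α]

instance : IsWellFounded α R := ⟨Subrelation.wf lt_of_rel wellFounded_lt⟩

theorem mem_branch_of_toLex_le_of_le {x y z u : α}
    (hxy : toLex (branch R x).boolIndicator ≤ toLex (branch R y).boolIndicator)
    (hyz : toLex (branch R y).boolIndicator ≤ toLex (branch R z).boolIndicator)
    (hx : u ∈ branch R x) (hz : u ∈ branch R z) : u ∈ branch R y := by
  have := Pi.eqOn_Iic_of_toLex_le_of_le hxy hyz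
    ((eqOn_boolIndicator_branch hx).trans (eqOn_boolIndicator_branch hz).symm) self_mem_Iic
  rw [mem_iff_boolIndicator] at hx ⊢
  rwa [this]

theorem exists_rel_rank_eq {β : Ordinal} {t : α} (hβ : β < rank R t) :
    ∃ u, R u t ∧ rank R u = β := by
  induction t using IsWellFounded.induction R with
  | _ t ih =>
    rw [IsWellFounded.rank_eq, Ordinal.lt_iSup_iff] at hβ
    obtain ⟨⟨r, hrt⟩, hβr⟩ := hβ
    rcases (Order.lt_succ_iff.1 hβr).eq_or_lt with rfl | hlt
    · exact ⟨r, hrt, rfl⟩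
    · obtain ⟨u, hur, rfl⟩ := ih r hrt hlt
      exact ⟨u, rel_trans hur hrt, rfl⟩

theorem rank_le_rank_lt (t : α) : rank R t ≤ rank (· < ·) t :=
  IsWellFounded.rank_le_rank_of_subrelation (fun _ _ => lt_of_rel) t

end IsTreeOrder

def IsEndHomogeneous {α S : Type*} [LT α] (F : α → α → α → S) (C : Set α) : Prop :=
  ∀ a ∈ C, ∀ b ∈ C, ∀ c ∈ C, ∀ d ∈ C, a < c → b < c → c < d → F a b c = F a b d

namespace IsEndHomogeneous

variable {α β S : Type*} {F : α → α → α → S} {C : Set α}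

theorem eq [LinearOrder α] (h : IsEndHomogeneous F C) {a b c d : α} (ha : a ∈ C) (hb : b ∈ C)
    (hc : c ∈ C) (hd : d ∈ C) (hac : a < c) (hbc : b < c) (had : a < d) (hbd : b < d) :
    F a b c = F a b d := by
  rcases lt_trichotomy c d with hcd | rfl | hdc
  · exact h a ha b hb c hc d hd hac hbc hcd
  · rfl
  · exact (h a ha b hb d hd c hc had hbd hdc).symm

theorem image [Preorder α] [Preorder β] {F : β → β → β → S} (g : α ↪o β)
    (hC : IsEndHomogeneous (fun a b c => F (g a) (g b) (g c)) C) :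
    IsEndHomogeneous F (g '' C) := by
  rintro _ ⟨a, ha, rfl⟩ _ ⟨b, hb, rfl⟩ _ ⟨c, hc, rfl⟩ _ ⟨d, hd, rfl⟩ hac hbc hcd
  exact hC a ha b hb c hc d hd (g.lt_iff_lt.1 hac) (g.lt_iff_lt.1 hbc) (g.lt_iff_lt.1 hcd)

end IsEndHomogeneous

section ErdosRado

variable {α : Type u} [LinearOrder α] [WellFoundedLT α] {S : Type*}

def erdosRadoTree (F : α → α → α → S) (r t : α) : Prop :=
  wellFounded_lt.fix (C := fun _ => Prop)
    (fun r ih => r < t ∧ ∀ a (ha : a < r) b (hb : b < r), ih a ha → ih b hb → F a b r = F a b t) r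

variable {F : α → α → α → S}

theorem erdosRadoTree_iff {r t : α} :
    erdosRadoTree F r t ↔ r < t ∧ ∀ a < r, ∀ b < r,
      erdosRadoTree F a t → erdosRadoTree F b t → F a b r = F a b t := by
  rw [erdosRadoTree, WellFounded.fix_eq]
  rfl

theorem erdosRadoTree_iff_of_rel {r t : α} (hrt : erdosRadoTree F r t) (s : α) :
    erdosRadoTree F s r ↔ erdosRadoTree F s t ∧ s < r := by
  induction s using WellFoundedLT.induction with
  | _ s ih =>
    have hFrt := (erdosRadoTree_iff.1 hrt).2
    rw [erdosRadoTree_iff, erdosRadoTree_iff]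
    constructor
    · rintro ⟨hsr, hFsr⟩
      refine ⟨⟨hsr.trans (erdosRadoTree_iff.1 hrt).1, fun a ha b hb hat hbt => ?_⟩, hsr⟩
      have har := (ih a ha).2 ⟨hat, ha.trans hsr⟩
      have hbr := (ih b hb).2 ⟨hbt, hb.trans hsr⟩
      exact (hFsr a ha b hb har hbr).trans (hFrt a (ha.trans hsr) b (hb.trans hsr) hat hbt)
    · rintro ⟨⟨-, hFst⟩, hsr⟩
      refine ⟨hsr, fun a ha b hb har hbr => ?_⟩
      have hat := ((ih a ha).1 har).1
      have hbt := ((ih b hb).1 hbr).1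
      exact (hFst a ha b hb hat hbt).trans (hFrt a (ha.trans hsr) b (hb.trans hsr) hat hbt).symm

instance : IsTreeOrder (erdosRadoTree F) where
  lt_of_rel h := (erdosRadoTree_iff.1 h).1
  rel_trans hab hbc := ((erdosRadoTree_iff_of_rel hbc _).1 hab).1
  rel_of_rel_of_rel hac hbc hab := (erdosRadoTree_iff_of_rel hbc _).2 ⟨hac, hab⟩

theorem isEndHomogeneous_of_chain {C : Set α}
    (hC : ∀ x ∈ C, ∀ y ∈ C, x < y → erdosRadoTree F x y) : IsEndHomogeneous F C :=
  fun a ha b hb c hc d hd hac hbc hcd => (erdosRadoTree_iff.1 (hC c hc d hd hcd)).2 a hac b hbc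
    (hC a ha d hd (hac.trans hcd)) (hC b hb d hd (hbc.trans hcd))

end ErdosRado

section Cardinal

variable {κ : Cardinal.{u}}

theorem exists_gt_of_le_mk (hκ : ℵ₀ ≤ κ) {P : Set κ.ord.ToType} (hP : κ ≤ #P)
    (t : κ.ord.ToType) : ∃ x ∈ P, t < x := by
  by_contra! h
  have hPt : P ⊆ insert t (Iio t) := fun x hx => (h x hx).eq_or_lt
  have hlt : #(Iio t) + 1 < κ :=
    add_lt_of_lt hκ (by simpa using mk_Iio_lt t) (one_lt_aleph0.trans_le hκ)
  exact (hP.trans ((mk_le_mk_of_subset hPt).trans mk_insert_le)).not_gt hlt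

theorem rank_lt_ord (t : κ.ord.ToType) : rank (· < ·) t < κ.ord := by
  rw [IsWellFounded.rank_eq_typein]
  simpa using typein_lt_type (α := κ.ord.ToType) (· < ·) t

theorem mk_setOf_rank_lt_lt {α : Type u} {R : α → α → Prop} [IsWellFounded α R]
    (hκ : κ.IsRegular) {β : Ordinal.{u}} (hβ : β.card < κ)
    (hlev : ∀ γ < β, #{t | rank R t = γ} < κ) :
    #{t | rank R t < β} < κ := by
  have hcover : {t | rank R t < β} ⊆
      ⋃ i : β.ToType, {t | rank R t = ToType.mk.symm i} :=
    fun t ht => mem_iUnion.2 ⟨ToType.mk ⟨_, ht⟩, by simp⟩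
  exact (mk_le_mk_of_subset hcover).trans_lt
    ((card_iUnion_lt_iff_forall_of_isRegular hκ (by simpa using hβ)).2
      fun i => hlev _ (ToType.mk.symm i).2)

theorem mk_arrow_lt_of_isStrongLimit (hκ : κ.IsStrongLimit) {X Y : Type u} (hX : #X < κ)
    (hY : #Y < κ) : #(X → Y) < κ := by
  rw [← power_def]
  calc #Y ^ #X ≤ (2 ^ #Y) ^ #X := power_le_power_right (cantor _).le
    _ = 2 ^ (#Y * #X) := power_mul.symm
    _ < κ := hκ.isStrongPrelimit (mul_lt_of_lt hκ.aleph0_le hY hX)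

theorem exists_orderEmbedding_range_eq {A : Set κ.ord.ToType} (hA : #A = κ) :
    ∃ g : κ.ord.ToType ↪o κ.ord.ToType, range g = A := by
  have htype : typeLT A = κ.ord :=
    le_antisymm ((type_set_le A).trans_eq (type_toType _)) (by rw [ord_le, card_type, hA])
  obtain ⟨e⟩ := type_eq.1 ((type_toType _).trans htype.symm)
  exact ⟨(OrderIso.ofRelIsoLT e).toOrderEmbedding.trans (OrderEmbedding.subtype A), by
    rw [RelEmbedding.coe_trans, range_comp, OrderIso.coe_toOrderEmbedding,
      (OrderIso.ofRelIsoLT e).surjective.range_eq, image_univ]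
    exact Subtype.range_coe⟩

end Cardinal

/-- The partition relation `κ → (κ)²₂`. -/
def PairPartitionProperty (κ : Cardinal.{u}) : Prop :=
  ∀ g : Finset κ.ord.ToType → Bool, ∃ H : Set κ.ord.ToType, #H = κ ∧
    ∀ s : Finset κ.ord.ToType, ↑s ⊆ H → s.card = 2 →
      ∀ t : Finset κ.ord.ToType, ↑t ⊆ H → t.card = 2 → g s = g t

namespace PairPartitionProperty

variable {κ : Cardinal.{u}}

theorem exists_homogeneous (hp : PairPartitionProperty κ)
    (c : κ.ord.ToType → κ.ord.ToType → Bool) :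
    ∃ H : Set κ.ord.ToType, #H = κ ∧ ∀ x ∈ H, ∀ y ∈ H, ∀ x' ∈ H, ∀ y' ∈ H,
      x < y → x' < y' → c x y = c x' y' := by
  classical
  obtain ⟨H, hH, hhom⟩ := hp fun s => if h : s.Nonempty then c (s.min' h) (s.max' h) else false
  refine ⟨H, hH, fun x hx y hy x' hx' y' hy' hxy hxy' => ?_⟩
  simpa [hxy.le, hxy'.le] using hhom {x, y} (by simp [insert_subset_iff, hx, hy])
    (Finset.card_pair hxy.ne) {x', y'} (by simp [insert_subset_iff, hx', hy'])
    (Finset.card_pair hxy'.ne)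

end PairPartitionProperty

section TreeProperty

open IsTreeOrder

variable {κ : Cardinal.{u}} {R : κ.ord.ToType → κ.ord.ToType → Prop} [IsTreeOrder R]

theorem exists_convex_cones (hp : PairPartitionProperty κ) :
    ∃ H : Set κ.ord.ToType, #H = κ ∧ ∀ x ∈ H, ∀ y ∈ H, ∀ z ∈ H, x < y → y < z →
      ∀ u, u ∈ branch R x → u ∈ branch R z → u ∈ branch R y := by
  classical
  obtain ⟨H, hH, hhom⟩ := hp.exists_homogeneous fun x y =>
    decide (toLex (branch R x).boolIndicator ≤ toLex (branch R y).boolIndicator)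
  refine ⟨H, hH, fun x hx y hy z hz hxy hyz u hux huz => ?_⟩
  have h := hhom x hx y hy y hy z hz hxy hyz
  by_cases hle : toLex (branch R x).boolIndicator ≤ toLex (branch R y).boolIndicator
  · exact mem_branch_of_toLex_le_of_le hle (by simpa [hle] using h) hux huz
  · have hyz : ¬toLex (branch R y).boolIndicator ≤ toLex (branch R z).boolIndicator :=
      decide_eq_false_iff_not.1 ((decide_eq_false hle).symm.trans h).symm
    exact mem_branch_of_toLex_le_of_le (not_le.1 hyz).le (not_le.1 hle).le huz hux

theorem rel_of_le_mk_cone (hκ : ℵ₀ ≤ κ) {H : Set κ.ord.ToType}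
    (hconv : ∀ x ∈ H, ∀ y ∈ H, ∀ z ∈ H, x < y → y < z →
      ∀ u, u ∈ branch R x → u ∈ branch R z → u ∈ branch R y)
    {u w : κ.ord.ToType} (hu : κ ≤ #{x ∈ H | u ∈ branch R x})
    (hw : κ ≤ #{x ∈ H | w ∈ branch R x}) (huw : u < w) : R u w := by
  obtain ⟨a, ha, -⟩ := exists_gt_of_le_mk hκ hu u
  obtain ⟨c, hc, hac⟩ := exists_gt_of_le_mk hκ hw a
  obtain ⟨z, hz, hcz⟩ := exists_gt_of_le_mk hκ hu c
  exact rel_of_mem_branch (hconv a ha.1 c hc.1 z hz.1 hac hcz u ha.2 hz.2) hc.2 huw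

theorem exists_rank_eq_le_mk_cone (hκ : κ.IsRegular)
    (hlev : ∀ β, #{t | rank R t = β} < κ) {H : Set κ.ord.ToType} (hH : κ ≤ #H)
    {β : Ordinal} (hβ : β < κ.ord) :
    ∃ u, rank R u = β ∧ κ ≤ #{x ∈ H | u ∈ branch R x} := by
  have hsmall : #{t | rank R t < Order.succ β} < κ :=
    mk_setOf_rank_lt_lt hκ (lt_ord.1 ((isSuccLimit_ord hκ.aleph0_le).succ_lt hβ)) fun γ _ => hlev γ
  have hbig : κ ≤ #{x ∈ H | β < rank R x} := by
    by_contra! hlt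
    have hcover : H ⊆ {x ∈ H | β < rank R x} ∪
        {t | rank R t < Order.succ β} := fun x hx => by
      simpa [hx, Order.lt_succ_iff] using lt_or_ge β (rank R x)
    exact hH.not_gt (((mk_le_mk_of_subset hcover).trans (mk_union_le _ _)).trans_lt
      (add_lt_of_lt hκ.aleph0_le hlt hsmall))
  choose p hpR hprank using fun x : {x ∈ H | β < rank R x} => exists_rel_rank_eq x.2.2
  obtain ⟨⟨u, hu⟩, T, hT, hκT, hTu⟩ := infinite_pigeonhole_set
    (fun x => (⟨p x, hprank x⟩ : {t | rank R t = β})) κ hbig hκ.aleph0_le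
    (by rw [hκ.cof_ord]; exact hlev β)
  refine ⟨u, hu, hκT.trans (mk_le_mk_of_subset fun x hx => ⟨(hT hx).1, Or.inr ?_⟩)⟩
  have hpu : p ⟨x, hT hx⟩ = u := congrArg Subtype.val (hTu hx)
  exact hpu ▸ hpR _

theorem exists_chain_of_pairPartitionProperty (hκ : κ.IsRegular) (hp : PairPartitionProperty κ)
    (hlev : ∀ β, #{t | rank R t = β} < κ) :
    ∃ C : Set κ.ord.ToType, #C = κ ∧ ∀ x ∈ C, ∀ y ∈ C, x < y → R x y := by
  obtain ⟨H, hH, hconv⟩ := exists_convex_cones (R := R) hp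
  choose u hurank huC using fun t : κ.ord.ToType =>
    exists_rank_eq_le_mk_cone hκ hlev hH.ge (rank_lt_ord t)
  have hinj : Function.Injective fun t => (⟨u t, huC t⟩ : {u | κ ≤ #{x ∈ H | u ∈ branch R x}}) :=
    fun t t' h => WellFoundedLT.rank_strictMono.injective <| by
      rw [← hurank t, ← hurank t', show u t = u t' from congrArg Subtype.val h]
  refine ⟨{u | κ ≤ #{x ∈ H | u ∈ branch R x}}, le_antisymm ?_ ?_,
    fun x hx y hy hxy => rel_of_le_mk_cone hκ.aleph0_le hconv hx hy hxy⟩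
  · exact (mk_set_le _).trans_eq (mk_ord_toType κ)
  · exact (mk_ord_toType κ).symm.le.trans (mk_le_of_injective hinj)

end TreeProperty

section Homogeneous

variable {κ : Cardinal.{u}} {S : Type u}

theorem mk_erdosRadoTree_level_lt (hκr : κ.IsRegular) (hκs : κ.IsStrongLimit) (hS : #S < κ)
    (F : κ.ord.ToType → κ.ord.ToType → κ.ord.ToType → S) (β : Ordinal) :
    #{t | rank (erdosRadoTree F) t = β} < κ := by
  induction β using WellFoundedLT.induction with
  | _ β ih =>
    rcases eq_empty_or_nonempty {t | rank (erdosRadoTree F) t = β} with he | ⟨t₀, rfl⟩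
    · rw [he, mk_eq_zero]
      exact hκr.pos
    set L := {t | rank (erdosRadoTree F) t = rank (erdosRadoTree F) t₀}
    set X := {t | rank (erdosRadoTree F) t < rank (erdosRadoTree F) t₀}
    have hX : #X < κ := mk_setOf_rank_lt_lt hκr
      (lt_ord.1 ((IsTreeOrder.rank_le_rank_lt t₀).trans_lt (rank_lt_ord t₀))) ih
    -- if the smaller of two nodes of equal rank coloured the pairs from `X` as the larger one
    -- does, it would lie below it
    have hinj : Function.Injective fun (t : L) (a b : X) => F a b t := by
      refine Function.Injective.of_lt_imp_ne fun x y hxy heq =>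
        (rank_lt_of_rel ?_).ne (x.2.trans y.2.symm)
      refine erdosRadoTree_iff.2 ⟨hxy, fun a _ b _ hay hby => ?_⟩
      exact congrFun₂ heq ⟨a, (rank_lt_of_rel hay).trans_eq y.2⟩
        ⟨b, (rank_lt_of_rel hby).trans_eq y.2⟩
    exact (mk_le_of_injective hinj).trans_lt
      (mk_arrow_lt_of_isStrongLimit hκs hX (mk_arrow_lt_of_isStrongLimit hκs hX hS))

theorem exists_isEndHomogeneous_subset (hκr : κ.IsRegular) (hκs : κ.IsStrongLimit)
    (hp : PairPartitionProperty κ) (hS : #S < κ) {A : Set κ.ord.ToType} (hA : #A = κ)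
    (F : κ.ord.ToType → κ.ord.ToType → κ.ord.ToType → S) :
    ∃ C ⊆ A, #C = κ ∧ IsEndHomogeneous F C := by
  obtain ⟨g, rfl⟩ := exists_orderEmbedding_range_eq hA
  obtain ⟨C, hC, hchain⟩ := exists_chain_of_pairPartitionProperty hκr hp
    (mk_erdosRadoTree_level_lt hκr hκs hS fun a b c => F (g a) (g b) (g c))
  exact ⟨g '' C, image_subset_range g C, by rw [mk_image_eq g.injective, hC],
    (isEndHomogeneous_of_chain hchain).image g⟩

theorem exists_homogeneous_pairs (hκr : κ.IsRegular) (hκs : κ.IsStrongLimit)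
    (hp : PairPartitionProperty κ) (hS : #S < κ) {A : Set κ.ord.ToType} (hA : #A = κ)
    (G : κ.ord.ToType → κ.ord.ToType → S) :
    ∃ U ⊆ A, #U = κ ∧ ∃ s, ∀ a ∈ U, ∀ b ∈ U, a < b → G a b = s := by
  obtain ⟨C, hCA, hC, hend⟩ := exists_isEndHomogeneous_subset hκr hκs hp hS hA fun a _ c => G a c
  choose next hnextC hnext using exists_gt_of_le_mk hκr.aleph0_le hC.ge
  obtain ⟨s, U, hUC, hU, hs⟩ := infinite_pigeonhole_set (fun a : C => G a (next a)) κ hC.ge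
    hκr.aleph0_le (by rwa [hκr.cof_ord])
  refine ⟨U, hUC.trans hCA, le_antisymm ((mk_set_le U).trans_eq (mk_ord_toType κ)) hU, s,
    fun a ha b hb hab => ?_⟩
  rw [← hs ha]
  exact hend.eq (hUC ha) (hUC ha) (hUC hb) (hnextC a) hab hab (hnext a) (hnext a)

theorem exists_homogeneous_triples (hκr : κ.IsRegular) (hκs : κ.IsStrongLimit)
    (hp : PairPartitionProperty κ) (hS : #S < κ)
    (f : κ.ord.ToType → κ.ord.ToType → κ.ord.ToType → S) :
    ∃ U : Set κ.ord.ToType, #U = κ ∧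
      ∃ s, ∀ a ∈ U, ∀ b ∈ U, ∀ c ∈ U, a < b → b < c → f a b c = s := by
  obtain ⟨C, -, hC, hend⟩ := exists_isEndHomogeneous_subset hκr hκs hp hS
    (by rw [mk_univ, mk_ord_toType]) f
  choose next hnextC hnext using exists_gt_of_le_mk hκr.aleph0_le hC.ge
  obtain ⟨U, hUC, hU, s, hs⟩ := exists_homogeneous_pairs hκr hκs hp hS hC
    fun a b => f a b (next b)
  refine ⟨U, hU, s, fun a ha b hb c hc hab hbc => ?_⟩
  rw [← hs a ha b hb hab]
  exact hend.eq (hUC ha) (hUC hb) (hUC hc) (hnextC b) (hab.trans hbc) hbc (hab.trans (hnext b))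
    (hnext b)

end Homogeneous

theorem Finset.exists_lt_lt_eq_of_card_eq_three {α : Type*} [LinearOrder α] {s : Finset α}
    (hs : s.card = 3) : ∃ a b c, a < b ∧ b < c ∧ s = {a, b, c} := by
  set e := s.orderEmbOfFin hs
  have h01 : e 0 < e 1 := by simp
  have h12 : e 1 < e 2 := by simp
  refine ⟨e 0, e 1, e 2, h01, h12, (Finset.eq_of_subset_of_card_le ?_ ?_).symm⟩
  · simp [Finset.insert_subset_iff, e, Finset.orderEmbOfFin_mem]
  · rw [hs, Finset.card_eq_three.2 ⟨_, _, _, h01.ne, (h01.trans h12).ne, h12.ne, rfl⟩]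

theorem stmt13_general (κ : Cardinal.{u})
    (hreg : κ.IsRegular) (hstrong : κ.IsStrongLimit)
    (hpairs : ∀ g : Finset κ.ord.ToType → Bool,
      ∃ H : Set κ.ord.ToType, Cardinal.mk H = κ ∧
        ∀ s : Finset κ.ord.ToType, ↑s ⊆ H → s.card = 2 →
          ∀ t : Finset κ.ord.ToType, ↑t ⊆ H → t.card = 2 → g s = g t)
    (S : Type u) (hS : Cardinal.mk S < κ) (f : Finset κ.ord.ToType → S) :
    ∃ U : Set κ.ord.ToType, Cardinal.mk U = κ ∧
      ∀ s : Finset κ.ord.ToType, ↑s ⊆ U → s.card = 3 →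
        ∀ t : Finset κ.ord.ToType, ↑t ⊆ U → t.card = 3 → f s = f t := by
  obtain ⟨U, hU, s₀, hs₀⟩ := exists_homogeneous_triples hreg hstrong hpairs hS
    fun a b c => f {a, b, c}
  have hfU : ∀ s : Finset κ.ord.ToType, ↑s ⊆ U → s.card = 3 → f s = s₀ := by
    intro s hsU hs
    obtain ⟨a, b, c, hab, hbc, rfl⟩ := Finset.exists_lt_lt_eq_of_card_eq_three hs
    simp only [Finset.coe_insert, Finset.coe_singleton, insert_subset_iff,
      singleton_subset_iff] at hsU
    exact hs₀ a hsU.1 b hsU.2.1 c hsU.2.2 hab hbc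
  exact ⟨U, hU, fun s hs h3 t ht h3' => (hfU s hs h3).trans (hfU t ht h3').symm⟩

/-- Let `κ` be an uncountable cardinal which is regular and a strong limit (i.e. inaccessible),
and assume that every 2-coloring of the two-element subsets of (a canonical type of
cardinality) `κ` has a homogeneous set of cardinality `κ` (the defining partition property
of a weakly compact cardinal).  Then for every set `S` of cardinality `< κ` and every
coloring `f` of the three-element subsets with colors in `S` there is a set `U` of
cardinality `κ` homogeneous for `f`: `f` is constant on the three-element subsets of `U`. -/
theorem stmt13 (κ : Cardinal.{u}) (huncount : ℵ₀ < κ)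
    (hreg : κ.IsRegular) (hstrong : κ.IsStrongLimit)
    (hpairs : ∀ g : Finset κ.ord.ToType → Bool,
      ∃ H : Set κ.ord.ToType, Cardinal.mk H = κ ∧
        ∀ s : Finset κ.ord.ToType, ↑s ⊆ H → s.card = 2 →
          ∀ t : Finset κ.ord.ToType, ↑t ⊆ H → t.card = 2 → g s = g t)
    (S : Type u) (hS : Cardinal.mk S < κ) (f : Finset κ.ord.ToType → S) :
    ∃ U : Set κ.ord.ToType, Cardinal.mk U = κ ∧
      ∀ s : Finset κ.ord.ToType, ↑s ⊆ U → s.card = 3 →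
        ∀ t : Finset κ.ord.ToType, ↑t ⊆ U → t.card = 3 → f s = f t :=
  stmt13_general κ hreg hstrong hpairs S hS f
end

section
/- Assume that every strongly separated topological space of cardinality 𝔠 contains an uncountable discrete subspace. Then for every Hausdorff topological space X of countable spread and every point x ∈ X, there is a family 𝒰 of open subsets of X with |𝒰| < 𝔠 and ⋂𝒰 = {x}; that is, every point of X has pseudo-character less than 𝔠. -/
universe u

open Cardinal

/-!
If the conclusion fails at `x`, every family of fewer than `𝔠` open neighbourhoods of `x`
contains a point other than `x` in its intersection. Choosing for each `z ≠ x` disjoint open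
sets `U z ∋ x` and `V z ∋ z`, transfinite recursion gives points `y α ≠ x` (`α < 𝔠`) with
`y α ∈ U (y β)` for all `β < α`. Then no later point lies in the closed neighbourhood
`closure (V (y β))` of `y β`, so `{y α | α < 𝔠}` is strongly right separated of cardinality `𝔠`.
An uncountable discrete subspace of it is discrete in `X`, contradicting countable spread.
-/

open Set Topology

section Recursion

variable {ι α : Type*} [Preorder ι] [WellFoundedLT ι]

theorem exists_seq_rel_of_lt (R : α → α → Prop)
    (h : ∀ (i : ι) (f : Iio i → α), ∃ a, ∀ j, R (f j) a) :
    ∃ y : ι → α, ∀ i j, i < j → R (y i) (y j) := by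
  choose g hg using h
  let y : ι → α := WellFoundedLT.fix fun i rec => g i fun j => rec j j.2
  refine ⟨y, fun i j hij => ?_⟩
  have hy : y j = g j fun k => y k := WellFoundedLT.fix_eq _ j
  exact hy ▸ hg j (fun k => y k) ⟨i, hij⟩

end Recursion

def HasCountableSpread (X : Type*) [TopologicalSpace X] : Prop :=
  ∀ D : Set X, DiscreteTopology D → D.Countable

theorem HasCountableSpread.subtype {X : Type*} [TopologicalSpace X] (h : HasCountableSpread X)
    (S : Set X) : HasCountableSpread S := by
  intro D hD
  have e : D ≃ₜ range fun d : D => (d : X) :=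
    (IsEmbedding.subtypeVal.comp IsEmbedding.subtypeVal).toHomeomorph
  have : Countable (range fun d : D => (d : X)) :=
    (h _ e.symm.isEmbedding.discreteTopology).to_subtype
  exact countable_coe_iff.mp e.injective.countable

section StronglySeparated

variable {X : Type*} [TopologicalSpace X] {ι : Type*} [LinearOrder ι] {y : ι → X}
  {V : ι → Set X}

theorem injective_of_notMem_closure (hyV : ∀ i, y i ∈ V i)
    (hsep : ∀ i j, i < j → y j ∉ closure (V i)) : Function.Injective y := by
  refine .of_lt_imp_ne fun i j hij hyij => hsep i j hij ?_
  exact hyij ▸ subset_closure (hyV i)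

theorem stronglyRightSeparated_range_s14 [WellFoundedLT ι] (hV : ∀ i, IsOpen (V i))
    (hyV : ∀ i, y i ∈ V i) (hsep : ∀ i j, i < j → y j ∉ closure (V i)) :
    StronglyRightSeparated (range y) := by
  let e := Equiv.ofInjective y (injective_of_notMem_closure hyV hsep)
  have he : ∀ a : range y, (a : X) = y (e.symm a) := fun a => by
    rw [← Equiv.apply_ofInjective_symm]
  refine ⟨e.symm ⁻¹'o (· < ·), RelIso.IsWellOrder.preimage _ e.symm,
    fun a => Subtype.val ⁻¹' closure (V (e.symm a)), fun a => ⟨?_, ?_, ?_⟩⟩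
  · exact isClosed_closure.preimage continuous_subtype_val
  · refine interior_maximal (preimage_mono subset_closure)
      ((hV _).preimage continuous_subtype_val) ?_
    simpa only [mem_preimage, he a] using hyV _
  · intro b hab hb
    exact hsep _ _ hab (he b ▸ hb)

end StronglySeparated

theorem exists_ne_forall_mem_of_forall_sInter_ne {X : Type u} [TopologicalSpace X] {x : X}
    {κ : Cardinal.{u}}
    (h : ∀ 𝒰 : Set (Set X), (∀ U ∈ 𝒰, IsOpen U) → #𝒰 < κ → ⋂₀ 𝒰 ≠ {x})
    {ι : Type u} (hι : #ι < κ) (U : ι → Set X) (hU : ∀ i, IsOpen (U i)) (hxU : ∀ i, x ∈ U i) :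
    ∃ z ≠ x, ∀ i, z ∈ U i := by
  have hne := h (range U) (forall_mem_range.2 hU) (mk_range_le.trans_lt hι)
  have hx : x ∈ ⋂₀ range U := by simpa using hxU
  obtain ⟨z, hz, hzx⟩ := exists_of_ssubset ((singleton_subset_iff.2 hx).ssubset_of_ne hne.symm)
  exact ⟨z, hzx, by simpa using hz⟩

/-- Assume every strongly separated topological space of cardinality `𝔠` contains an
uncountable discrete subspace.  Then in every Hausdorff space `X` of countable spread every
point `x` has pseudo-character `< 𝔠`: there is a family `𝒰` of open sets with `|𝒰| < 𝔠`
whose intersection is `{x}`. -/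
theorem stmt14 {X : Type u} [TopologicalSpace X] [T2Space X]
    (hss : ∀ (Y : Type u) [TopologicalSpace Y], Cardinal.mk Y = continuum →
      StronglySeparated Y → ∃ D : Set Y, ¬ D.Countable ∧ DiscreteTopology D)
    (hspread : ∀ D : Set X, DiscreteTopology D → D.Countable) (x : X) :
    ∃ 𝒰 : Set (Set X), (∀ U ∈ 𝒰, IsOpen U) ∧ Cardinal.mk 𝒰 < continuum ∧
      ⋂₀ 𝒰 = {x} := by
  by_contra! h
  choose V U hV hU hzV hxU hVU using fun z : {z : X // z ≠ x} => t2_separation z.2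
  obtain ⟨y, hy⟩ := exists_seq_rel_of_lt (ι := continuum.{u}.ord.ToType) (fun a b => b.1 ∈ U a)
    fun i f => by
      obtain ⟨z, hzx, hz⟩ := exists_ne_forall_mem_of_forall_sInter_ne h
        (by simpa using mk_Iio_lt i) (U ∘ f) (fun _ => hU _) (fun _ => hxU _)
      exact ⟨⟨z, hzx⟩, hz⟩
  have hsep : ∀ i j, i < j → (y j : X) ∉ closure (V (y i)) := fun i j hij =>
    disjoint_left.1 ((hVU (y i)).symm.closure_right (hU _)) (hy i j hij)
  have hcard : #(range fun i => (y i : X)) = continuum := by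
    rw [mk_range_eq _ (injective_of_notMem_closure (fun i => hzV (y i)) hsep), mk_ord_toType]
  obtain ⟨D, hD, hDd⟩ := hss _ hcard
    (Or.inr (stronglyRightSeparated_range_s14 (fun i => hV (y i)) (fun i => hzV (y i)) hsep))
  exact hD (HasCountableSpread.subtype hspread _ D hDd)
end

section
/- Let X be a topological space with |X| ≤ 𝔠, assume 2^λ = 𝔠 for every infinite cardinal λ < 𝔠, and assume every closed subset F of X is the closure of some subset A of X with |A| < 𝔠. Then the family of all open subsets of X has cardinality at most 𝔠. -/
universe u

open Cardinal

/-- The set of subsets of `X` of cardinality `< 𝔠` has cardinality at most `𝔠`. -/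
lemma aux_small_subsets {X : Type u}
    (hX : Cardinal.mk X ≤ continuum)
    (hpow : ∀ lam : Cardinal.{u}, ℵ₀ ≤ lam → lam < continuum → (2 : Cardinal) ^ lam = continuum) :
    Cardinal.mk {A : Set X // Cardinal.mk A < continuum} ≤ continuum := by
  set c : Cardinal.{u} := continuum
  have hc0 : c.ord ≠ 0 := by
    simp [c, Cardinal.ord_eq_zero]
    exact continuum_ne_zero
  haveI : Nonempty c.ord.ToType := Ordinal.toType_nonempty_iff_ne_zero.2 hc0
  haveI : IsWellOrder c.ord.ToType (· < ·) := isWellOrder_lt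
  set f : c.ord.ToType → Set (Set X) :=
    fun i => {A : Set X | Cardinal.mk A ≤ Cardinal.mk (Set.Iio i)}
  have hsub : {A : Set X | Cardinal.mk A < c} ⊆ ⋃ i, f i := by
    intro A hA
    have h1 : (Cardinal.mk A).ord < c.ord := Cardinal.ord_lt_ord.2 hA
    have h1' : (Cardinal.mk A).ord < Ordinal.type (α := c.ord.ToType) (· < ·) := by
      rwa [Ordinal.type_toType]
    set i : c.ord.ToType := Ordinal.enum (α := c.ord.ToType) (· < ·) ⟨(Cardinal.mk A).ord, h1'⟩
    have h2 : Ordinal.typein (α := c.ord.ToType) (· < ·) i = (Cardinal.mk A).ord :=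
      Ordinal.typein_enum _ _
    have h3 : Cardinal.mk (Set.Iio i) = Cardinal.mk A := by
      have h4 : (Ordinal.typein (α := c.ord.ToType) (· < ·) i).card
          = Cardinal.mk (Set.Iio i) := (Ordinal.card_typein _).trans rfl
      rw [h2, Cardinal.card_ord] at h4
      exact h4.symm
    exact Set.mem_iUnion.2 ⟨i, by simp [f, h3]⟩
  have hbound : ∀ i : c.ord.ToType, Cardinal.mk (f i) ≤ c := by
    intro i
    obtain ⟨lam, hlamdef⟩ : ∃ lam, Cardinal.mk (Set.Iio i) = lam := ⟨_, rfl⟩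
    rw [show f i = {A : Set X | Cardinal.mk A ≤ lam} by rw [← hlamdef]]
    have hlam : lam < c := hlamdef ▸ Cardinal.mk_Iio_ord_toType i
    have h1 : Cardinal.mk {A : Set X | Cardinal.mk A ≤ lam} ≤ max (Cardinal.mk X) ℵ₀ ^ lam :=
      Cardinal.mk_bounded_set_le X lam
    have h2 : max (Cardinal.mk X) ℵ₀ ≤ c := max_le hX aleph0_le_continuum
    have h3 : Cardinal.mk {A : Set X | Cardinal.mk A ≤ lam} ≤ c ^ lam :=
      h1.trans (Cardinal.power_le_power_right h2)
    rcases lt_or_ge lam ℵ₀ with hfin | hinf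
    · obtain ⟨n, rfl⟩ := Cardinal.lt_aleph0.1 hfin
      exact h3.trans (by exact_mod_cast Cardinal.power_nat_le aleph0_le_continuum)
    · have : c ^ lam = c := by
        have : c ^ lam = (2 : Cardinal) ^ (ℵ₀ * lam) := by
          rw [Cardinal.power_mul]; rfl
        rw [this, Cardinal.mul_eq_right hinf hinf aleph0_ne_zero, hpow lam hinf hlam]
      exact h3.trans_eq this
  calc Cardinal.mk {A : Set X // Cardinal.mk A < c}
      ≤ Cardinal.mk (⋃ i, f i) := Cardinal.mk_le_mk_of_subset hsub
    _ ≤ Cardinal.mk c.ord.ToType * ⨆ i, Cardinal.mk (f i) := Cardinal.mk_iUnion_le f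
    _ ≤ c * c := by
        apply mul_le_mul'
        · rw [Cardinal.mk_ord_toType]
        · exact ciSup_le' hbound
    _ = c := Cardinal.mul_eq_self aleph0_le_continuum

/-- Let `X` be a topological space with `|X| ≤ 𝔠`, assume `2^λ = 𝔠` for every infinite
cardinal `λ < 𝔠`, and assume every closed subset of `X` is the closure of a subset of
cardinality `< 𝔠`.  Then the family of all open subsets of `X` has cardinality at most `𝔠`. -/
theorem stmt15 {X : Type u} [TopologicalSpace X]
    (hX : Cardinal.mk X ≤ continuum)
    (hpow : ∀ lam : Cardinal.{u}, ℵ₀ ≤ lam → lam < continuum → (2 : Cardinal) ^ lam = continuum)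
    (hcl : ∀ F : Set X, IsClosed F → ∃ A : Set X, Cardinal.mk A < continuum ∧ F = closure A) :
    Cardinal.mk {U : Set X // IsOpen U} ≤ continuum := by
  have h1 : Cardinal.mk {U : Set X // IsOpen U} ≤ Cardinal.mk {F : Set X // IsClosed F} := by
    apply Cardinal.mk_le_of_injective (f := fun U => ⟨(U : Set X)ᶜ, U.2.isClosed_compl⟩)
    intro U V h
    have := congrArg Subtype.val h
    simp only at this
    exact Subtype.ext (compl_injective this)
  have h2 : Cardinal.mk {F : Set X // IsClosed F} ≤
      Cardinal.mk {A : Set X // Cardinal.mk A < continuum} := by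
    apply Cardinal.mk_le_of_surjective
      (f := fun A : {A : Set X // Cardinal.mk A < continuum} =>
        (⟨closure (A : Set X), isClosed_closure⟩ : {F : Set X // IsClosed F}))
    rintro ⟨F, hF⟩
    obtain ⟨A, hA, hFA⟩ := hcl F hF
    exact ⟨⟨A, hA⟩, by simp [hFA.symm]⟩
  exact h1.trans (h2.trans (aux_small_subsets hX hpow))
end

section
/- Every infinite Hausdorff topological space X has at least 𝔠 open subsets, i.e., the cardinality of the family of all open subsets of X is at least 2^{ℵ₀}. -/
universe u

open Cardinal Set Function

/-!
Splitting off a nonempty open set from an infinite open set (keeping an infinite open remainder)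
over and over yields pairwise disjoint nonempty open sets `U 0, U 1, …`, and `S ↦ ⋃ n ∈ S, U n`
then embeds `Set ℕ` into the open sets.
-/

/- If the separating neighbourhood `A` of `x` meets `V` in a finite set, then `x` is isolated
and `{x}` is split off; otherwise `V ∩ A` is the infinite remainder. -/
theorem IsOpen.exists_nonempty_isOpen_disjoint_infinite_isOpen {X : Type*} [TopologicalSpace X]
    [T2Space X] {V : Set X} (hV : IsOpen V) (hVi : V.Infinite) :
    ∃ U W : Set X, IsOpen U ∧ U.Nonempty ∧ IsOpen W ∧ W.Infinite ∧ Disjoint U W ∧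
      U ⊆ V ∧ W ⊆ V := by
  obtain ⟨x, hx, y, hy, hxy⟩ := hVi.nontrivial
  obtain ⟨A, B, hA, hB, hxA, hyB, hAB⟩ := t2_separation hxy
  by_cases hfin : (V ∩ A).Finite
  · have hx_open : IsOpen {x} :=
      isOpen_singleton_of_finite_mem_nhds x ((hV.inter hA).mem_nhds ⟨hx, hxA⟩) hfin
    exact ⟨{x}, V \ {x}, hx_open, singleton_nonempty x, hV.sdiff isClosed_singleton,
      hVi.sdiff (finite_singleton x), disjoint_sdiff_right, singleton_subset_iff.2 hx, sdiff_subset⟩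
  · exact ⟨V ∩ B, V ∩ A, hV.inter hB, ⟨y, hy, hyB⟩, hV.inter hA, hfin,
      hAB.symm.mono inter_subset_right inter_subset_right, inter_subset_left, inter_subset_left⟩

theorem exists_seq_nonempty_isOpen_pairwise_disjoint (X : Type*) [TopologicalSpace X]
    [T2Space X] [Infinite X] :
    ∃ U : ℕ → Set X, (∀ n, IsOpen (U n)) ∧ (∀ n, (U n).Nonempty) ∧ Pairwise (Disjoint on U) := by
  have split := fun V : {V : Set X // IsOpen V ∧ V.Infinite} =>
    V.2.1.exists_nonempty_isOpen_disjoint_infinite_isOpen V.2.2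
  choose U W hU hUne hW hWi hUW hUV hWV using split
  let V : ℕ → {V : Set X // IsOpen V ∧ V.Infinite} := fun n =>
    Nat.rec ⟨univ, isOpen_univ, infinite_univ⟩ (fun _ V => ⟨W V, hW V, hWi V⟩) n
  have hV_anti : Antitone fun n => (V n).1 := antitone_nat_of_succ_le fun n => hWV (V n)
  refine ⟨fun n => U (V n), fun n => hU _, fun n => hUne _, ?_⟩
  refine (pairwise_disjoint_on _).2 fun m n hmn => (hUW (V m)).mono_right ?_
  calc U (V n) ⊆ (V n).1 := hUV _
    _ ⊆ (V (m + 1)).1 := hV_anti hmn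
    _ = W (V m) := rfl

/-- Every infinite Hausdorff topological space has at least `𝔠 = 2^{ℵ₀}` open subsets. -/
theorem stmt16 (X : Type u) [TopologicalSpace X] [T2Space X] [Infinite X] :
    continuum ≤ Cardinal.mk {U : Set X // IsOpen U} := by
  obtain ⟨U, hU, hUne, hdisj⟩ := exists_seq_nonempty_isOpen_pairwise_disjoint X
  let unionOpen : Set ℕ → {U : Set X // IsOpen U} := fun S =>
    ⟨⋃ n ∈ S, U n, isOpen_biUnion fun n _ => hU n⟩
  have hinj : Injective unionOpen := fun S T h =>
    hdisj.biUnion_injective hUne (congrArg Subtype.val h)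
  simpa [mk_set, two_power_aleph0] using lift_mk_le_lift_mk_of_injective hinj
end
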